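/- arXiv:1212.0609 — 4 statements merged into one kernel-verified Lean document; each statement's English description precedes it below -/
import Mathlib

section
/- Let n = 3 and assume β_{12} ≠ 0, β_{13} ≠ 0, β_{23} ≠ 0, and fix x̌ ∈ X_1 with ζ_1(x̌) ≠ 0. Then a family y = (y_i(x))_{x∈X_i, 1≤i≤3} solves the blockwise canonical equations if and only if there exists t ∈ ℝ (namely t = y_1(x̌)) such that y_1(x) = ζ_1(x)·t/ζ_1(x̌) for all x ∈ X_1, y_2(x) = β_{23}ζ_2(x)·t/(β_{13}ζ_1(x̌)) for all x ∈ X_2, and y_3(x) = β_{23}ζ_3(x)·t/(β_{12}ζ_1(x̌)) for all x ∈ X_3. In particular the solution space is one-dimensional. -/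
open Finset

/-- `μ̃_i`, the mean of the pmf `pt i` on `X i`. -/
noncomputable def muN (X : ℕ → Finset ℝ) (pt : ℕ → ℝ → ℝ) (i : ℕ) : ℝ :=
  ∑ x ∈ X i, pt i x * x

/-- `σ̃²_i`, the variance of the pmf `pt i` on `X i`. -/
noncomputable def sig2N (X : ℕ → Finset ℝ) (pt : ℕ → ℝ → ℝ) (i : ℕ) : ℝ :=
  ∑ x ∈ X i, pt i x * (x - muN X pt i) ^ 2

/-- `ζ_i(x) = π̃_i(x)(x − μ̃_i)/σ̃²_i`. -/
noncomputable def zetaN (X : ℕ → Finset ℝ) (pt : ℕ → ℝ → ℝ) (i : ℕ) (x : ℝ) : ℝ :=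
  pt i x * (x - muN X pt i) / sig2N X pt i

/-- The KNW closed-form function for the index sequence `σ(1), …, σ(m)`:
`Π(x) = ∏_{i=1}^m π_{σ(i)}(x_{σ(i)})
  + ∑_{i=2}^m [ ζ_{σ(i)}(x_{σ(i)}) ∑_{j=1}^{i−1} (∏_{k≤i−1, k≠j} π̂_{σ(k)}(x_{σ(k)}))
      β_{σ(i)σ(j)} ζ_{σ(j)}(x_{σ(j)}) ] ∏_{k=i+1}^m π_{σ(k)}(x_{σ(k)})`. -/
noncomputable def knwClosedF (X : ℕ → Finset ℝ) (π πh pt : ℕ → ℝ → ℝ) (β : ℕ → ℕ → ℝ)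
    (m : ℕ) (σ : ℕ → ℕ) (x : ℕ → ℝ) : ℝ :=
  (∏ i ∈ Finset.Icc 1 m, π (σ i) (x (σ i))) +
    ∑ i ∈ Finset.Icc 2 m,
      (zetaN X pt (σ i) (x (σ i)) *
          ∑ j ∈ Finset.Icc 1 (i - 1),
            (∏ k ∈ (Finset.Icc 1 (i - 1)).erase j, πh (σ k) (x (σ k))) *
              β (σ i) (σ j) * zetaN X pt (σ j) (x (σ j))) *
        ∏ k ∈ Finset.Icc (i + 1) m, π (σ k) (x (σ k))


/-!
By symmetry of `β`, the coefficient `β_{jk}` of a canonical equation only depends on the index `i`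
missing from `{j, k}`; call it `b_i`. The equations then say that
`ζ_j(x_j) · b_i y_i(x_i) = ζ_i(x_i) · b_j y_j(x_j)` whenever `i ≠ j`, i.e. that the family `b_i y_i`
is proportional to `ζ_i` across all three blocks. Nondegeneracy of `π̃_2` gives a point where
`ζ_2 ≠ 0`, which pins down `b_1 y_1` inside its own block, and the proportionality constant is
read off at `x̌`.
-/

lemma sig2N_pos {X : ℕ → Finset ℝ} {pt : ℕ → ℝ → ℝ} {i : ℕ} (hnn : ∀ x ∈ X i, 0 ≤ pt i x)
    {c : ℝ} (hc : c ∈ X i) (hpc : pt i c ≠ 0) (hcμ : c ≠ muN X pt i) :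
    0 < sig2N X pt i :=
  Finset.sum_pos' (fun x hx => mul_nonneg (hnn x hx) (sq_nonneg _))
    ⟨c, hc, mul_pos ((hnn c hc).lt_of_ne' hpc) (sq_pos_of_ne_zero (sub_ne_zero.2 hcμ))⟩

/-- Of two distinct support points, one differs from the mean. -/
lemma exists_zetaN_ne_zero {X : ℕ → Finset ℝ} {pt : ℕ → ℝ → ℝ} {i : ℕ}
    (hnn : ∀ x ∈ X i, 0 ≤ pt i x) (hnd : 1 < ((X i).filter fun x => pt i x ≠ 0).card) :
    ∃ x ∈ X i, zetaN X pt i x ≠ 0 := by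
  obtain ⟨a, ha, b, hb, hab⟩ := Finset.one_lt_card.1 hnd
  rw [Finset.mem_filter] at ha hb
  obtain ⟨c, ⟨hc, hpc⟩, hcμ⟩ : ∃ c, (c ∈ X i ∧ pt i c ≠ 0) ∧ c ≠ muN X pt i := by
    by_cases haμ : a = muN X pt i
    · exact ⟨b, hb, fun hbμ => hab (haμ.trans hbμ.symm)⟩
    · exact ⟨a, ha, haμ⟩
  exact ⟨c, hc, div_ne_zero (mul_ne_zero hpc (sub_ne_zero.2 hcμ)) (sig2N_pos hnn hc hpc hcμ).ne'⟩

theorem forall_mul_eq_mul_iff_eq_mul_div {ι α : Type*} {I : Set ι} {S : ι → Set α}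
    {ζ w : ι → α → ℝ} {i₀ j₀ : ι} (hi₀ : i₀ ∈ I) (hj₀ : j₀ ∈ I) (hij₀ : i₀ ≠ j₀)
    {x₀ z₀ : α} (hx₀ : x₀ ∈ S i₀) (hz₀ : z₀ ∈ S j₀) (hζx₀ : ζ i₀ x₀ ≠ 0) (hζz₀ : ζ j₀ z₀ ≠ 0) :
    (∀ i ∈ I, ∀ j ∈ I, i ≠ j → ∀ x ∈ S i, ∀ z ∈ S j, ζ j z * w i x = ζ i x * w j z) ↔
      ∀ i ∈ I, ∀ x ∈ S i, w i x = ζ i x * (w i₀ x₀ / ζ i₀ x₀) := by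
  constructor
  · intro h
    have off_diag : ∀ i ∈ I, i ≠ i₀ → ∀ x ∈ S i, w i x = ζ i x * (w i₀ x₀ / ζ i₀ x₀) := by
      intro i hi hii₀ x hx
      have := h i₀ hi₀ i hi (Ne.symm hii₀) x₀ hx₀ x hx
      field_simp
      linarith
    intro i hi x hx
    rcases eq_or_ne i i₀ with rfl | hii₀
    · have hcross := h i hi j₀ hj₀ hij₀ x hx z₀ hz₀
      rw [off_diag j₀ hj₀ hij₀.symm z₀ hz₀] at hcross
      refine mul_left_cancel₀ hζz₀ ?_
      linear_combination hcross
    · exact off_diag i hi hii₀ x hx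
  · intro h i hi j hj _ x hx z hz
    rw [h i hi x hx, h j hj z hz]
    ring

/-- `betaOpp β i = β j k` where `{i, j, k} = {1, 2, 3}`. -/
def betaOpp (β : ℕ → ℕ → ℝ) : ℕ → ℝ
  | 1 => β 2 3
  | 2 => β 1 3
  | _ => β 1 2

lemma beta_eq_betaOpp {β : ℕ → ℕ → ℝ}
    (hβ : ∀ i ∈ Finset.Icc 1 3, ∀ j ∈ Finset.Icc 1 3, β i j = β j i)
    {i j k : ℕ} (hi : i ∈ Finset.Icc 1 3) (hj : j ∈ Finset.Icc 1 3) (hk : k ∈ Finset.Icc 1 3)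
    (hij : i ≠ j) (hik : i ≠ k) (hjk : j ≠ k) :
    β j k = betaOpp β i := by
  have h32 := hβ 3 (by decide) 2 (by decide)
  have h31 := hβ 3 (by decide) 1 (by decide)
  have h21 := hβ 2 (by decide) 1 (by decide)
  obtain ⟨hi₁, hi₃⟩ := Finset.mem_Icc.1 hi
  obtain ⟨hj₁, hj₃⟩ := Finset.mem_Icc.1 hj
  obtain ⟨hk₁, hk₃⟩ := Finset.mem_Icc.1 hk
  interval_cases i <;> interval_cases j <;> interval_cases k <;> simp_all [betaOpp]

lemma exists_third_mem_Icc_one_three :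
    ∀ i ∈ Finset.Icc 1 3, ∀ j ∈ Finset.Icc 1 3, ∃ k ∈ Finset.Icc 1 3, i ≠ k ∧ j ≠ k := by
  decide

/-- The second equation for `(i, j, k)` is the first one for `(i, k, j)`, so only pairs matter. -/
theorem canonical_equations_iff_pairwise {X : ℕ → Finset ℝ} {β : ℕ → ℕ → ℝ}
    (hβ : ∀ i ∈ Finset.Icc 1 3, ∀ j ∈ Finset.Icc 1 3, β i j = β j i)
    (hX : ∀ k ∈ Finset.Icc 1 3, (X k).Nonempty) (ζ y : ℕ → ℝ → ℝ) :
    (∀ i ∈ Finset.Icc 1 3, ∀ j ∈ Finset.Icc 1 3, ∀ k ∈ Finset.Icc 1 3,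
      i ≠ j → i ≠ k → j ≠ k →
      ∀ xi ∈ X i, ∀ xj ∈ X j, ∀ xk ∈ X k,
        ζ j xj * β j k * y i xi = ζ i xi * β i k * y j xj ∧
        ζ k xk * β j k * y i xi = ζ i xi * β i j * y k xk) ↔
      ∀ i ∈ Finset.Icc 1 3, ∀ j ∈ Finset.Icc 1 3, i ≠ j → ∀ xi ∈ X i, ∀ xj ∈ X j,
        ζ j xj * (betaOpp β i * y i xi) = ζ i xi * (betaOpp β j * y j xj) := by
  constructor
  · intro h i hi j hj hij xi hxi xj hxj
    obtain ⟨k, hk, hik, hjk⟩ := exists_third_mem_Icc_one_three i hi j hj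
    obtain ⟨xk, hxk⟩ := hX k hk
    have := (h i hi j hj k hk hij hik hjk xi hxi xj hxj xk hxk).1
    rw [beta_eq_betaOpp hβ hi hj hk hij hik hjk,
      beta_eq_betaOpp hβ hj hi hk hij.symm hjk hik] at this
    linear_combination this
  · intro h i hi j hj k hk hij hik hjk xi hxi xj hxj xk hxk
    rw [beta_eq_betaOpp hβ hi hj hk hij hik hjk, beta_eq_betaOpp hβ hj hi hk hij.symm hjk hik,
      beta_eq_betaOpp hβ hk hi hj hik.symm hjk.symm hij]
    constructor
    · linear_combination h i hi j hj hij xi hxi xj hxj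
    · linear_combination h i hi k hk hik xi hxi xk hxk

theorem stmt15_general
    (X : ℕ → Finset ℝ) (pt : ℕ → ℝ → ℝ) (β : ℕ → ℕ → ℝ)
    (hpt_nn : ∀ i ∈ Finset.Icc 1 3, ∀ x ∈ X i, 0 ≤ pt i x)
    (hpt_nd : ∀ i ∈ Finset.Icc 1 3, 1 < ((X i).filter fun x => pt i x ≠ 0).card)
    (hβ_symm : ∀ i ∈ Finset.Icc 1 3, ∀ j ∈ Finset.Icc 1 3, β i j = β j i)
    (hβ12 : β 1 2 ≠ 0) (hβ13 : β 1 3 ≠ 0) (hβ23 : β 2 3 ≠ 0)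
    (xc : ℝ) (hxc : xc ∈ X 1) (hζxc : zetaN X pt 1 xc ≠ 0)
    (y : ℕ → ℝ → ℝ) :
    -- `y` solves the blockwise canonical equations …
    (∀ i ∈ Finset.Icc 1 3, ∀ j ∈ Finset.Icc 1 3, ∀ k ∈ Finset.Icc 1 3,
      i ≠ j → i ≠ k → j ≠ k →
      ∀ xi ∈ X i, ∀ xj ∈ X j, ∀ xk ∈ X k,
        zetaN X pt j xj * β j k * y i xi = zetaN X pt i xi * β i k * y j xj ∧
        zetaN X pt k xk * β j k * y i xi = zetaN X pt i xi * β i j * y k xk) ↔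
      -- … iff `y` has the one-parameter closed form (with parameter `t = y_1(x̌)`)
      (∃ t : ℝ, t = y 1 xc ∧
        (∀ x ∈ X 1, y 1 x = zetaN X pt 1 x * t / zetaN X pt 1 xc) ∧
        (∀ x ∈ X 2, y 2 x = β 2 3 * zetaN X pt 2 x * t / (β 1 3 * zetaN X pt 1 xc)) ∧
        (∀ x ∈ X 3, y 3 x = β 2 3 * zetaN X pt 3 x * t / (β 1 2 * zetaN X pt 1 xc))) := by
  have hζ := fun i (hi : i ∈ Finset.Icc 1 3) => exists_zetaN_ne_zero (hpt_nn i hi) (hpt_nd i hi)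
  obtain ⟨x₂, hx₂, hζx₂⟩ := hζ 2 (by decide)
  have hX : ∀ k ∈ Finset.Icc 1 3, (X k).Nonempty := fun k hk =>
    let ⟨x, hx, _⟩ := hζ k hk; ⟨x, hx⟩
  refine (canonical_equations_iff_pairwise hβ_symm hX _ y).trans <|
    (forall_mul_eq_mul_iff_eq_mul_div (I := ↑(Finset.Icc 1 3)) (S := fun i => ↑(X i))
      (w := fun i x => betaOpp β i * y i x) (by decide) (by decide) (by decide) hxc hx₂
      hζxc hζx₂).trans ?_
  rw [exists_eq_left, show ((Finset.Icc 1 3 : Finset ℕ) : Set ℕ) = {1, 2, 3} by ext; simp; omega]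
  simp only [Set.forall_mem_insert, Set.mem_singleton_iff, forall_eq, Finset.mem_coe, betaOpp]
  refine and_congr (forall₂_congr fun x _ => ?_) (and_congr (forall₂_congr fun x _ => ?_)
    (forall₂_congr fun x _ => ?_))
  all_goals field_simp

theorem stmt15
    (X : ℕ → Finset ℝ) (π pt : ℕ → ℝ → ℝ) (β : ℕ → ℕ → ℝ)
    (hXne : ∀ i ∈ Finset.Icc 1 3, (X i).Nonempty)
    (hπ_pos : ∀ i ∈ Finset.Icc 1 3, ∀ x ∈ X i, 0 < π i x)
    (hπ_sum : ∀ i ∈ Finset.Icc 1 3, ∑ x ∈ X i, π i x = 1)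
    (hpt_nn : ∀ i ∈ Finset.Icc 1 3, ∀ x ∈ X i, 0 ≤ pt i x)
    (hpt_sum : ∀ i ∈ Finset.Icc 1 3, ∑ x ∈ X i, pt i x = 1)
    (hpt_nd : ∀ i ∈ Finset.Icc 1 3, 1 < ((X i).filter fun x => pt i x ≠ 0).card)
    (hβ_symm : ∀ i ∈ Finset.Icc 1 3, ∀ j ∈ Finset.Icc 1 3, β i j = β j i)
    (hβ12 : β 1 2 ≠ 0) (hβ13 : β 1 3 ≠ 0) (hβ23 : β 2 3 ≠ 0)
    (xc : ℝ) (hxc : xc ∈ X 1) (hζxc : zetaN X pt 1 xc ≠ 0)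
    (y : ℕ → ℝ → ℝ) :
    -- `y` solves the blockwise canonical equations …
    (∀ i ∈ Finset.Icc 1 3, ∀ j ∈ Finset.Icc 1 3, ∀ k ∈ Finset.Icc 1 3,
      i ≠ j → i ≠ k → j ≠ k →
      ∀ xi ∈ X i, ∀ xj ∈ X j, ∀ xk ∈ X k,
        zetaN X pt j xj * β j k * y i xi = zetaN X pt i xi * β i k * y j xj ∧
        zetaN X pt k xk * β j k * y i xi = zetaN X pt i xi * β i j * y k xk) ↔
      -- … iff `y` has the one-parameter closed form (with parameter `t = y_1(x̌)`)
      (∃ t : ℝ, t = y 1 xc ∧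
        (∀ x ∈ X 1, y 1 x = zetaN X pt 1 x * t / zetaN X pt 1 xc) ∧
        (∀ x ∈ X 2, y 2 x = β 2 3 * zetaN X pt 2 x * t / (β 1 3 * zetaN X pt 1 xc)) ∧
        (∀ x ∈ X 3, y 3 x = β 2 3 * zetaN X pt 3 x * t / (β 1 2 * zetaN X pt 1 xc))) :=
  stmt15_general X pt β hpt_nn hpt_nd hβ_symm hβ12 hβ13 hβ23 xc hxc hζxc y
end

section
/- Let n ≥ 4 and let ρ_{ij} (1 ≤ i ≠ j ≤ n) be real numbers with ρ_{ij} = ρ_{ji}, ρ_{12} ≠ 0 and ρ_{1n} ≠ 0. Then the correlation multiplication equalities hold, i.e. ρ_{ij}ρ_{kl} = ρ_{il}ρ_{jk} = ρ_{ik}ρ_{jl} for every quadruple of distinct indices 1 ≤ i,j,k,l ≤ n, if and only if: ρ_{2k} = ρ_{2n}ρ_{1k}/ρ_{1n} for all 3 ≤ k ≤ n−1; ρ_{ij} = ρ_{1i}ρ_{2n}ρ_{1j}/(ρ_{12}ρ_{1n}) for all 3 ≤ i ≠ j ≤ n−1; and ρ_{kn} = ρ_{2n}ρ_{1k}/ρ_{12}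 for all 3 ≤ k ≤ n−1. -/
theorem stmt16 (n : ℕ) (hn : 4 ≤ n) (ρ : ℕ → ℕ → ℝ)
    (hsymm : ∀ i ∈ Finset.Icc 1 n, ∀ j ∈ Finset.Icc 1 n, ρ i j = ρ j i)
    (h12 : ρ 1 2 ≠ 0) (h1n : ρ 1 n ≠ 0) :
    -- the correlation multiplication equalities hold …
    (∀ i ∈ Finset.Icc 1 n, ∀ j ∈ Finset.Icc 1 n, ∀ k ∈ Finset.Icc 1 n, ∀ l ∈ Finset.Icc 1 n,
      i ≠ j → i ≠ k → i ≠ l → j ≠ k → j ≠ l → k ≠ l →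
      ρ i j * ρ k l = ρ i l * ρ j k ∧ ρ i l * ρ j k = ρ i k * ρ j l) ↔
    -- … iff all correlations are determined by `ρ_{1k}` (2 ≤ k ≤ n) and `ρ_{2n}` as follows
    ((∀ k, 3 ≤ k → k ≤ n - 1 → ρ 2 k = ρ 2 n * ρ 1 k / ρ 1 n) ∧
     (∀ i j, 3 ≤ i → i ≤ n - 1 → 3 ≤ j → j ≤ n - 1 → i ≠ j →
        ρ i j = ρ 1 i * ρ 2 n * ρ 1 j / (ρ 1 2 * ρ 1 n)) ∧
     (∀ k, 3 ≤ k → k ≤ n - 1 → ρ k n = ρ 2 n * ρ 1 k / ρ 1 2)) := by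
  have mem : ∀ m, 1 ≤ m → m ≤ n → m ∈ Finset.Icc 1 n := fun m h1 h2 =>
    Finset.mem_Icc.mpr ⟨h1, h2⟩
  constructor
  · intro h
    refine ⟨?_, ?_, ?_⟩
    · intro k hk3 hkn
      have H := h 1 (mem _ (by omega) (by omega)) 2 (mem _ (by omega) (by omega))
        k (mem _ (by omega) (by omega)) n (mem _ (by omega) (by omega))
        (by omega) (by omega) (by omega) (by omega) (by omega) (by omega)
      field_simp
      linear_combination H.2
    · intro i j hi3 hin hj3 hjn hij
      have H1 := h 1 (mem _ (by omega) (by omega)) 2 (mem _ (by omega) (by omega))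
        i (mem _ (by omega) (by omega)) j (mem _ (by omega) (by omega))
        (by omega) (by omega) (by omega) (by omega) (by omega) (by omega)
      have H2 := h 1 (mem _ (by omega) (by omega)) 2 (mem _ (by omega) (by omega))
        i (mem _ (by omega) (by omega)) n (mem _ (by omega) (by omega))
        (by omega) (by omega) (by omega) (by omega) (by omega) (by omega)
      field_simp
      linear_combination ρ 1 n * H1.1 + ρ 1 j * H2.2
    · intro k hk3 hkn
      have H := h 1 (mem _ (by omega) (by omega)) 2 (mem _ (by omega) (by omega))
        k (mem _ (by omega) (by omega)) n (mem _ (by omega) (by omega))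
        (by omega) (by omega) (by omega) (by omega) (by omega) (by omega)
      field_simp
      linear_combination H.1 + H.2
  · rintro ⟨hA, hB, hC⟩
    have key : ∀ a b, 2 ≤ a → a ≤ n → 2 ≤ b → b ≤ n → a ≠ b →
        ρ a b = ρ 1 a * ρ 1 b * (ρ 2 n / (ρ 1 2 * ρ 1 n)) := by
      intro a b ha2 han hb2 hbn hab
      have hs : ρ a b = ρ b a :=
        hsymm a (mem _ (by omega) (by omega)) b (mem _ (by omega) (by omega))
      rcases eq_or_ne a 2 with rfl | ha2'
      · rcases eq_or_ne b n with rfl | hbn'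
        · field_simp
        · rw [hA b (by omega) (by omega)]; field_simp
      · rcases eq_or_ne a n with rfl | han'
        · rcases eq_or_ne b 2 with rfl | hb2'
          · rw [hs]; field_simp
          · rw [hs, hC b (by omega) (by omega)]; field_simp
        · -- 3 ≤ a ≤ n-1
          rcases eq_or_ne b 2 with rfl | hb2'
          · rw [hs, hA a (by omega) (by omega)]; field_simp
          · rcases eq_or_ne b n with rfl | hbn'
            · rw [hC a (by omega) (by omega)]; field_simp
            · rw [hB a b (by omega) (by omega) (by omega) (by omega) hab]
              field_simp
    intro i hi j hj k hk l hl hij hik hil hjk hjl hkl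
    simp only [Finset.mem_Icc] at hi hj hk hl
    rcases eq_or_ne i 1 with rfl | hi1
    · rw [key k l (by omega) (by omega) (by omega) (by omega) hkl,
        key j k (by omega) (by omega) (by omega) (by omega) hjk,
        key j l (by omega) (by omega) (by omega) (by omega) hjl]
      constructor <;> ring
    · rcases eq_or_ne j 1 with rfl | hj1
      · rw [hsymm i (mem _ (by omega) (by omega)) 1 (mem _ (by omega) (by omega)),
          key k l (by omega) (by omega) (by omega) (by omega) hkl,
          key i l (by omega) (by omega) (by omega) (by omega) hil,
          key i k (by omega) (by omega) (by omega) (by omega) hik]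
        constructor <;> ring
      · rcases eq_or_ne k 1 with rfl | hk1
        · rw [hsymm j (mem _ (by omega) (by omega)) 1 (mem _ (by omega) (by omega)),
            hsymm i (mem _ (by omega) (by omega)) 1 (mem _ (by omega) (by omega)),
            key i j (by omega) (by omega) (by omega) (by omega) hij,
            key i l (by omega) (by omega) (by omega) (by omega) hil,
            key j l (by omega) (by omega) (by omega) (by omega) hjl]
          constructor <;> ring
        · rcases eq_or_ne l 1 with rfl | hl1
          · rw [hsymm k (mem _ (by omega) (by omega)) 1 (mem _ (by omega) (by omega)),
              hsymm i (mem _ (by omega) (by omega)) 1 (mem _ (by omega) (by omega)),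
              hsymm j (mem _ (by omega) (by omega)) 1 (mem _ (by omega) (by omega)),
              key i j (by omega) (by omega) (by omega) (by omega) hij,
              key j k (by omega) (by omega) (by omega) (by omega) hjk,
              key i k (by omega) (by omega) (by omega) (by omega) hik]
            constructor <;> ring
          · rw [key i j (by omega) (by omega) (by omega) (by omega) hij,
              key k l (by omega) (by omega) (by omega) (by omega) hkl,
              key i l (by omega) (by omega) (by omega) (by omega) hil,
              key j k (by omega) (by omega) (by omega) (by omega) hjk,
              key i k (by omega) (by omega) (by omega) (by omega) hik,
              key j l (by omega) (by omega) (by omega) (by omega) hjl]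
            constructor <;> ring
end

section
/- Let n ≥ 3, assume β_{ij} ≠ 0 for all 1 ≤ i ≠ j ≤ n, fix x̌ ∈ X_1 with ζ_1(x̌) ≠ 0, and, when n ≥ 4, assume the correlation multiplication equalities β_{ij}β_{kl} = β_{il}β_{jk} = β_{ik}β_{jl} for every quadruple of distinct indices i,j,k,l. Then the family (Π_g)_g has the permutation property (Π_g = Π_e for every permutation g) if and only if, with t = π̂_1(x̌) − π_1(x̌): π̂_1(x) − π_1(x) = ζ_1(x)·t/ζ_1(x̌) for all x ∈ X_1; π̂_i(x) − π_i(x) = β_{in}ζ_i(x)·t/(β_{1n}ζ_1(x̌)) for all x ∈ X_i and 2 ≤ i ≤ n−1; and π̂_n(x) − π_n(x) = β_{2n}ζ_n(x)·t/(β_{12}ζ_1(x̌)) for all x ∈ X_n. -/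
open Finset

namespace KNW17

def lastF (σ : Equiv.Perm ℕ) (A : Finset ℕ) : ℕ := σ ((A.image σ.symm).sup id)

noncomputable def innerC (β : ℕ → ℕ → ℝ) (Zf Df : ℕ → ℝ) (A : Finset ℕ) (ℓ : ℕ) : ℝ :=
  ∑ b ∈ A.erase ℓ, β ℓ b * Zf ℓ * Zf b * ∏ k ∈ (A.erase ℓ).erase b, Df k

lemma sup_id_mem {A : Finset ℕ} (h : A.Nonempty) : A.sup id ∈ A := by
  rw [← Finset.sup'_eq_sup h id, ← Finset.max'_eq_sup']
  exact A.max'_mem h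

lemma lastF_mem (σ : Equiv.Perm ℕ) {A : Finset ℕ} (h : A.Nonempty) : lastF σ A ∈ A := by
  have h2 : (A.image σ.symm).Nonempty := h.image _
  obtain ⟨a, ha, hEq⟩ := Finset.mem_image.mp (sup_id_mem h2)
  rw [lastF, ← hEq, Equiv.apply_symm_apply]
  exact ha

lemma image_Icc (n : ℕ) (σ : Equiv.Perm ℕ) (hσ : ∀ p ∈ Icc 1 n, σ p ∈ Icc 1 n) :
    (Icc 1 n).image σ = Icc 1 n := by
  apply Finset.eq_of_subset_of_card_le
  · intro a ha
    obtain ⟨p, hp, rfl⟩ := Finset.mem_image.mp ha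
    exact hσ p hp
  · rw [Finset.card_image_of_injective _ σ.injective]

lemma symm_mem_Icc (n : ℕ) (σ : Equiv.Perm ℕ) (hσ : ∀ p ∈ Icc 1 n, σ p ∈ Icc 1 n)
    {a : ℕ} (ha : a ∈ Icc 1 n) : σ.symm a ∈ Icc 1 n := by
  rw [← image_Icc n σ hσ] at ha
  obtain ⟨p, hp, rfl⟩ := Finset.mem_image.mp ha
  rwa [Equiv.symm_apply_apply]

lemma triple_facts {i j : ℕ} {S : Finset ℕ} (hi2 : 2 ≤ i) (hj1 : 1 ≤ j) (hji : j ≤ i-1)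
    (hS : S ⊆ (Icc 1 (i-1)).erase j) :
    (∀ k ∈ S, 1 ≤ k ∧ k ≤ i - 1 ∧ k ≠ j) ∧ j ∉ S ∧ i ∉ insert j S ∧
      (insert i (insert j S)).sup id = i := by
  have hSmem : ∀ k ∈ S, 1 ≤ k ∧ k ≤ i - 1 ∧ k ≠ j := fun k hk => by
    have h := hS hk
    rw [Finset.mem_erase, Finset.mem_Icc] at h
    exact ⟨h.2.1, h.2.2, h.1⟩
  refine ⟨hSmem, fun h => (hSmem j h).2.2 rfl, ?_, ?_⟩
  · simp only [Finset.mem_insert]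
    rintro (rfl | h)
    · omega
    · have := hSmem i h; omega
  · apply le_antisymm
    · apply Finset.sup_le
      intro k hk
      simp only [Finset.mem_insert] at hk
      simp only [id_eq]
      rcases hk with h | h | h
      · omega
      · omega
      · have := hSmem k h; omega
    · exact Finset.le_sup (f := id) (Finset.mem_insert_self i _)

lemma stepA (n : ℕ) (Pf Zf Df Phf : ℕ → ℝ) (β : ℕ → ℕ → ℝ) (τ : ℕ → ℕ)
    (hPh : ∀ k, Phf k = Pf k + Df k) :
    ∑ i ∈ Icc 2 n, (Zf (τ i) *
        ∑ j ∈ Icc 1 (i - 1),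
          (∏ k ∈ (Icc 1 (i - 1)).erase j, Phf (τ k)) * β (τ i) (τ j) * Zf (τ j)) *
      ∏ k ∈ Icc (i + 1) n, Pf (τ k)
    = ∑ i ∈ Icc 2 n, ∑ j ∈ Icc 1 (i-1), ∑ S ∈ ((Icc 1 (i-1)).erase j).powerset,
        β (τ i) (τ j) * Zf (τ i) * Zf (τ j) * (∏ k ∈ S, Df (τ k)) *
          ∏ k ∈ Icc 1 n \ insert i (insert j S), Pf (τ k) := by
  refine Finset.sum_congr rfl fun i hi => ?_
  obtain ⟨hi2, hin⟩ := Finset.mem_Icc.mp hi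
  have hexp : ∀ j, (∏ k ∈ (Icc 1 (i-1)).erase j, Phf (τ k))
      = ∑ S ∈ ((Icc 1 (i-1)).erase j).powerset,
          (∏ k ∈ S, Df (τ k)) * ∏ k ∈ (Icc 1 (i-1)).erase j \ S, Pf (τ k) := by
    intro j
    rw [← Finset.prod_add (fun k => Df (τ k)) (fun k => Pf (τ k))]
    exact Finset.prod_congr rfl fun k _ => by rw [hPh]; ring
  simp only [hexp, Finset.sum_mul, Finset.mul_sum]
  refine Finset.sum_congr rfl fun j hj => ?_
  obtain ⟨hj1, hji⟩ := Finset.mem_Icc.mp hj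
  refine Finset.sum_congr rfl fun S hS => ?_
  obtain ⟨hSmem, hjS, hiS, hsupM⟩ := triple_facts hi2 hj1 hji (Finset.mem_powerset.mp hS)
  have hdisj : Disjoint ((Icc 1 (i-1)).erase j \ S) (Icc (i+1) n) := by
    rw [Finset.disjoint_left]
    intro k hk hk2
    rw [Finset.mem_sdiff, Finset.mem_erase, Finset.mem_Icc] at hk
    rw [Finset.mem_Icc] at hk2
    omega
  have hun : ((Icc 1 (i-1)).erase j \ S) ∪ Icc (i+1) n = Icc 1 n \ insert i (insert j S) := by
    ext k
    by_cases hk : k ∈ S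
    · obtain ⟨h1, h2, h3⟩ := hSmem k hk
      simp [Finset.mem_union, Finset.mem_sdiff, Finset.mem_erase, Finset.mem_Icc,
        Finset.mem_insert, hk]
      omega
    · simp [Finset.mem_union, Finset.mem_sdiff, Finset.mem_erase, Finset.mem_Icc,
        Finset.mem_insert, hk]
      omega
  rw [← hun, Finset.prod_union hdisj]
  ring

lemma stepB (n : ℕ) (G : ℕ → ℕ → Finset ℕ → ℝ) :
    ∑ i ∈ Icc 2 n, ∑ j ∈ Icc 1 (i-1), ∑ S ∈ ((Icc 1 (i-1)).erase j).powerset, G i j S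
    = ∑ M ∈ (Icc 1 n).powerset.filter (fun A => 2 ≤ A.card), ∑ j ∈ M.erase (M.sup id),
        G (M.sup id) j ((M.erase (M.sup id)).erase j) := by
  have h1 : ∑ i ∈ Icc 2 n, ∑ j ∈ Icc 1 (i-1), ∑ S ∈ ((Icc 1 (i-1)).erase j).powerset, G i j S
      = ∑ q ∈ (Icc 2 n).sigma (fun i => (Icc 1 (i-1)).sigma
          fun j => ((Icc 1 (i-1)).erase j).powerset), G q.1 q.2.1 q.2.2 :=
    (Finset.sum_congr rfl fun i _ => Finset.sum_sigma' _ _ _).trans (Finset.sum_sigma' _ _ _)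
  have h2 : ∑ M ∈ (Icc 1 n).powerset.filter (fun A => 2 ≤ A.card), ∑ j ∈ M.erase (M.sup id),
        G (M.sup id) j ((M.erase (M.sup id)).erase j)
      = ∑ q ∈ ((Icc 1 n).powerset.filter (fun A => 2 ≤ A.card)).sigma
          (fun M => M.erase (M.sup id)),
          G (q.1.sup id) q.2 ((q.1.erase (q.1.sup id)).erase q.2) :=
    Finset.sum_sigma' _ _ _
  rw [h1, h2]
  refine Finset.sum_nbij' (fun p => ⟨insert p.1 (insert p.2.1 p.2.2), p.2.1⟩)
    (fun q => ⟨q.1.sup id, ⟨q.2, (q.1.erase (q.1.sup id)).erase q.2⟩⟩) ?_ ?_ ?_ ?_ ?_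
  · rintro ⟨i, j, S⟩ hp
    simp only [Finset.mem_sigma, Finset.mem_Icc, Finset.mem_powerset] at hp
    obtain ⟨⟨hi2, hin⟩, ⟨hj1, hji⟩, hS⟩ := hp
    obtain ⟨hSmem, hjS, hiS, hsupM⟩ := triple_facts hi2 hj1 hji hS
    simp only [Finset.mem_sigma, Finset.mem_filter, Finset.mem_powerset]
    refine ⟨⟨?_, ?_⟩, ?_⟩
    · intro k hk
      simp only [Finset.mem_insert] at hk
      rw [Finset.mem_Icc]
      rcases hk with rfl | rfl | h
      · omega
      · omega
      · have := hSmem k h; omega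
    · exact Finset.one_lt_card.mpr ⟨i, Finset.mem_insert_self _ _, j,
        Finset.mem_insert_of_mem (Finset.mem_insert_self _ _), by omega⟩
    · rw [hsupM, Finset.mem_erase]
      exact ⟨by omega, Finset.mem_insert_of_mem (Finset.mem_insert_self _ _)⟩
  · rintro ⟨M, j⟩ hq
    simp only [Finset.mem_sigma, Finset.mem_filter, Finset.mem_powerset] at hq
    obtain ⟨⟨hM, hcard⟩, hj⟩ := hq
    rw [Finset.mem_erase] at hj
    have hMne : M.Nonempty := Finset.card_pos.mp (by omega)
    have hiM : M.sup id ∈ M := sup_id_mem hMne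
    have hiI := Finset.mem_Icc.mp (hM hiM)
    have hjI := Finset.mem_Icc.mp (hM hj.2)
    have hjle : id j ≤ M.sup id := Finset.le_sup hj.2
    simp only [id_eq] at hjle
    have hjsup : j ≠ M.sup id := hj.1
    simp only [Finset.mem_sigma, Finset.mem_Icc, Finset.mem_powerset]
    refine ⟨⟨?_, ?_⟩, ⟨?_, ?_⟩, ?_⟩
    · omega
    · omega
    · omega
    · omega
    · intro k hk
      rw [Finset.mem_erase] at hk
      obtain ⟨hkj, hk⟩ := hk
      rw [Finset.mem_erase] at hk
      obtain ⟨hki, hkM⟩ := hk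
      have hkI := Finset.mem_Icc.mp (hM hkM)
      have hkle : id k ≤ M.sup id := Finset.le_sup hkM
      simp only [id_eq] at hkle
      rw [Finset.mem_erase, Finset.mem_Icc]
      omega
  · rintro ⟨i, j, S⟩ hp
    simp only [Finset.mem_sigma, Finset.mem_Icc, Finset.mem_powerset] at hp
    obtain ⟨⟨hi2, hin⟩, ⟨hj1, hji⟩, hS⟩ := hp
    obtain ⟨hSmem, hjS, hiS, hsupM⟩ := triple_facts hi2 hj1 hji hS
    simp only [hsupM, Finset.erase_insert hiS, Finset.erase_insert hjS]
  · rintro ⟨M, j⟩ hq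
    simp only [Finset.mem_sigma, Finset.mem_filter, Finset.mem_powerset] at hq
    obtain ⟨⟨hM, hcard⟩, hj⟩ := hq
    have hMne : M.Nonempty := Finset.card_pos.mp (by omega)
    have hiM : M.sup id ∈ M := sup_id_mem hMne
    simp only [Finset.insert_erase hj, Finset.insert_erase hiM]
  · rintro ⟨i, j, S⟩ hp
    simp only [Finset.mem_sigma, Finset.mem_Icc, Finset.mem_powerset] at hp
    obtain ⟨⟨hi2, hin⟩, ⟨hj1, hji⟩, hS⟩ := hp
    obtain ⟨hSmem, hjS, hiS, hsupM⟩ := triple_facts hi2 hj1 hji hS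
    simp only [hsupM, Finset.erase_insert hiS, Finset.erase_insert hjS]


lemma stepC (n : ℕ) (Pf Zf Df : ℕ → ℝ) (β : ℕ → ℕ → ℝ) (σ : Equiv.Perm ℕ)
    (hσ : ∀ p ∈ Icc 1 n, σ p ∈ Icc 1 n) :
    ∑ M ∈ (Icc 1 n).powerset.filter (fun A => 2 ≤ A.card), ∑ j ∈ M.erase (M.sup id),
        (β (σ (M.sup id)) (σ j) * Zf (σ (M.sup id)) * Zf (σ j) *
          (∏ k ∈ (M.erase (M.sup id)).erase j, Df (σ k)) *
          ∏ k ∈ Icc 1 n \ insert (M.sup id) (insert j ((M.erase (M.sup id)).erase j)), Pf (σ k))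
    = ∑ A ∈ (Icc 1 n).powerset.filter (fun A => 2 ≤ A.card),
        innerC β Zf Df A (lastF σ A) * ∏ k ∈ Icc 1 n \ A, Pf k := by
  refine Finset.sum_nbij' (fun M => M.image σ) (fun A => A.image σ.symm) ?_ ?_ ?_ ?_ ?_
  · intro M hM
    rw [Finset.mem_filter, Finset.mem_powerset] at hM ⊢
    refine ⟨?_, ?_⟩
    · intro a ha
      obtain ⟨p, hp, rfl⟩ := Finset.mem_image.mp ha
      exact hσ p (hM.1 hp)
    · rw [Finset.card_image_of_injective _ σ.injective]; exact hM.2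
  · intro A hA
    rw [Finset.mem_filter, Finset.mem_powerset] at hA ⊢
    refine ⟨?_, ?_⟩
    · intro a ha
      obtain ⟨p, hp, rfl⟩ := Finset.mem_image.mp ha
      exact symm_mem_Icc n σ hσ (hA.1 hp)
    · rw [Finset.card_image_of_injective _ σ.symm.injective]; exact hA.2
  · intro M _
    show ((M.image σ).image σ.symm) = M
    rw [Finset.image_image, Equiv.symm_comp_self, Finset.image_id]
  · intro A _
    show ((A.image σ.symm).image σ) = A
    rw [Finset.image_image, Equiv.self_comp_symm, Finset.image_id]
  · intro M hM
    rw [Finset.mem_filter, Finset.mem_powerset] at hM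
    obtain ⟨hMsub, hMcard⟩ := hM
    have hMne : M.Nonempty := Finset.card_pos.mp (by omega)
    have hiM : M.sup id ∈ M := sup_id_mem hMne
    have hA_symm : (M.image σ).image σ.symm = M := by
      rw [Finset.image_image, Equiv.symm_comp_self, Finset.image_id]
    have hlast : lastF σ (M.image σ) = σ (M.sup id) := by
      rw [lastF, hA_symm]
    have hsdiff : Icc 1 n \ M.image σ = (Icc 1 n \ M).image σ := by
      rw [Finset.image_sdiff _ _ σ.injective, image_Icc n σ hσ]
    have hprodP : ∏ k ∈ Icc 1 n \ M.image σ, Pf k = ∏ k ∈ Icc 1 n \ M, Pf (σ k) := by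
      rw [hsdiff, Finset.prod_image (fun a _ b _ h => σ.injective h)]
    rw [hlast, innerC, hprodP]
    have hAer : (M.image σ).erase (σ (M.sup id)) = (M.erase (M.sup id)).image σ :=
      (Finset.image_erase σ.injective M (M.sup id)).symm
    rw [hAer, Finset.sum_image (fun a _ b _ h => σ.injective h), Finset.sum_mul]
    refine Finset.sum_congr rfl fun j hj => ?_
    have hins : insert (M.sup id) (insert j ((M.erase (M.sup id)).erase j)) = M := by
      rw [Finset.insert_erase hj, Finset.insert_erase hiM]
    have hDer : ((M.erase (M.sup id)).image σ).erase (σ j)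
        = ((M.erase (M.sup id)).erase j).image σ :=
      (Finset.image_erase σ.injective _ j).symm
    rw [hins, hDer, Finset.prod_image (fun a _ b _ h => σ.injective h)]

lemma expansion (n : ℕ) (Pf Zf Df Phf : ℕ → ℝ) (β : ℕ → ℕ → ℝ) (σ : Equiv.Perm ℕ)
    (hσ : ∀ p ∈ Icc 1 n, σ p ∈ Icc 1 n)
    (hPh : ∀ k, Phf k = Pf k + Df k) :
    ∑ i ∈ Icc 2 n, (Zf (σ i) *
        ∑ j ∈ Icc 1 (i - 1),
          (∏ k ∈ (Icc 1 (i - 1)).erase j, Phf (σ k)) * β (σ i) (σ j) * Zf (σ j)) *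
      ∏ k ∈ Icc (i + 1) n, Pf (σ k)
    = ∑ A ∈ (Icc 1 n).powerset.filter (fun A => 2 ≤ A.card),
        innerC β Zf Df A (lastF σ A) * ∏ k ∈ Icc 1 n \ A, Pf k := by
  rw [stepA n Pf Zf Df Phf β σ hPh,
    stepB n (fun i j S => β (σ i) (σ j) * Zf (σ i) * Zf (σ j) * (∏ k ∈ S, Df (σ k)) *
      ∏ k ∈ Icc 1 n \ insert i (insert j S), Pf (σ k))]
  exact stepC n Pf Zf Df β σ hσ


section PMF

variable (X : ℕ → Finset ℝ) (pt : ℕ → ℝ → ℝ)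

lemma sig2_pos {i : ℕ} (hnn : ∀ x ∈ X i, 0 ≤ pt i x)
    (hnd : 1 < ((X i).filter fun x => pt i x ≠ 0).card) : 0 < sig2N X pt i := by
  obtain ⟨a, ha, b, hb, hab⟩ := Finset.one_lt_card.mp hnd
  rw [Finset.mem_filter] at ha hb
  rw [sig2N]
  apply Finset.sum_pos'
  · exact fun x hx => mul_nonneg (hnn x hx) (sq_nonneg _)
  · by_cases haμ : a = muN X pt i
    · refine ⟨b, hb.1, mul_pos ((hnn b hb.1).lt_of_ne (Ne.symm hb.2)) ?_⟩
      have hbne : b - muN X pt i ≠ 0 := sub_ne_zero.mpr (by rw [← haμ]; exact fun h => hab h.symm)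
      positivity
    · refine ⟨a, ha.1, mul_pos ((hnn a ha.1).lt_of_ne (Ne.symm ha.2)) ?_⟩
      have hane : a - muN X pt i ≠ 0 := sub_ne_zero.mpr haμ
      positivity

lemma zeta_sum_zero {i : ℕ} (hsum : ∑ x ∈ X i, pt i x = 1) :
    ∑ u ∈ X i, zetaN X pt i u = 0 := by
  simp only [zetaN]
  rw [← Finset.sum_div]
  have h : ∑ u ∈ X i, pt i u * (u - muN X pt i) = 0 := by
    have : ∀ u, pt i u * (u - muN X pt i) = pt i u * u - pt i u * muN X pt i :=
      fun u => by ring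
    simp only [this]
    rw [Finset.sum_sub_distrib, ← Finset.sum_mul, hsum]
    rw [muN]; ring
  rw [h, zero_div]

lemma zeta_exists_ne {i : ℕ} (hnn : ∀ x ∈ X i, 0 ≤ pt i x)
    (hnd : 1 < ((X i).filter fun x => pt i x ≠ 0).card) :
    ∃ w ∈ X i, zetaN X pt i w ≠ 0 := by
  by_contra h
  push_neg at h
  have hs := sig2_pos X pt hnn hnd
  have hz : ∀ w ∈ X i, pt i w * (w - muN X pt i) = 0 := by
    intro w hw
    have := h w hw
    rw [zetaN, div_eq_zero_iff] at this
    rcases this with h1 | h1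
    · exact h1
    · exact absurd h1 (ne_of_gt hs)
  have : sig2N X pt i = 0 := by
    rw [sig2N]
    apply Finset.sum_eq_zero
    intro w hw
    have h1 : pt i w * (w - muN X pt i) ^ 2
        = pt i w * (w - muN X pt i) * (w - muN X pt i) := by ring
    rw [h1, hz w hw, zero_mul]
  exact absurd this (ne_of_gt hs)

end PMF

noncomputable def inner2 (X : ℕ → Finset ℝ) (pt π πh : ℕ → ℝ → ℝ) (β : ℕ → ℕ → ℝ)
    (A : Finset ℕ) (ℓ : ℕ) (x : ℕ → ℝ) : ℝ :=
  innerC β (fun k => zetaN X pt k (x k)) (fun k => πh k (x k) - π k (x k)) A ℓ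

lemma prod_update_eq {x : ℕ → ℝ} {k : ℕ} {u : ℝ} {s : Finset ℕ} (hk : k ∉ s) (f : ℕ → ℝ → ℝ) :
    ∏ m ∈ s, f m (Function.update x k u m) = ∏ m ∈ s, f m (x m) :=
  Finset.prod_congr rfl fun m hm => by
    have hmk : m ≠ k := fun h => hk (h ▸ hm)
    rw [Function.update_of_ne hmk]

lemma inner2_congr {X : ℕ → Finset ℝ} {pt π πh : ℕ → ℝ → ℝ} {β : ℕ → ℕ → ℝ}
    {A : Finset ℕ} {ℓ : ℕ} {x₁ x₂ : ℕ → ℝ} (hℓ : ℓ ∈ A) (h : ∀ m ∈ A, x₁ m = x₂ m) :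
    inner2 X pt π πh β A ℓ x₁ = inner2 X pt π πh β A ℓ x₂ := by
  simp only [inner2, innerC]
  refine Finset.sum_congr rfl fun b hb => ?_
  have hbA : b ∈ A := Finset.mem_of_mem_erase hb
  rw [h ℓ hℓ, h b hbA]
  congr 1
  refine Finset.prod_congr rfl fun m hm => ?_
  rw [h m (Finset.mem_of_mem_erase (Finset.mem_of_mem_erase hm))]

lemma inner2_sum_update_zero {X : ℕ → Finset ℝ} {pt π πh : ℕ → ℝ → ℝ} {β : ℕ → ℕ → ℝ}
    {A : Finset ℕ} {ℓ k : ℕ} (x : ℕ → ℝ)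
    (hzsum : ∑ u ∈ X k, zetaN X pt k u = 0)
    (hdsum : ∑ u ∈ X k, (πh k u - π k u) = 0)
    (hkA : k ∈ A) (hℓA : ℓ ∈ A) :
    ∑ u ∈ X k, inner2 X pt π πh β A ℓ (Function.update x k u) = 0 := by
  simp only [inner2, innerC]
  rw [Finset.sum_comm]
  apply Finset.sum_eq_zero
  intro b hb
  rw [Finset.mem_erase] at hb
  by_cases hkl : k = ℓ
  · subst hkl
    have hterm : ∀ u, β k b * zetaN X pt k (Function.update x k u k) *
          zetaN X pt b (Function.update x k u b) *
          ∏ m ∈ (A.erase k).erase b, (πh m (Function.update x k u m) - π m (Function.update x k u m))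
        = (β k b * zetaN X pt b (x b) *
            ∏ m ∈ (A.erase k).erase b, (πh m (x m) - π m (x m))) * zetaN X pt k u := by
      intro u
      rw [Function.update_self, Function.update_of_ne hb.1]
      rw [prod_update_eq (s := (A.erase k).erase b)
        (fun hm => (Finset.mem_erase.mp (Finset.mem_of_mem_erase hm)).1 rfl) (fun m v => πh m v - π m v)]
      ring
    rw [Finset.sum_congr rfl fun u _ => hterm u, ← Finset.mul_sum, hzsum, mul_zero]
  · by_cases hkb : k = b
    · subst hkb
      have hterm : ∀ u, β ℓ k * zetaN X pt ℓ (Function.update x k u ℓ) *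
            zetaN X pt k (Function.update x k u k) *
            ∏ m ∈ (A.erase ℓ).erase k, (πh m (Function.update x k u m) - π m (Function.update x k u m))
          = (β ℓ k * zetaN X pt ℓ (x ℓ) *
              ∏ m ∈ (A.erase ℓ).erase k, (πh m (x m) - π m (x m))) * zetaN X pt k u := by
        intro u
        rw [Function.update_self, Function.update_of_ne (fun h => hkl h.symm)]
        rw [prod_update_eq (s := (A.erase ℓ).erase k) (fun hm => (Finset.mem_erase.mp hm).1 rfl)
          (fun m v => πh m v - π m v)]
        ring
      rw [Finset.sum_congr rfl fun u _ => hterm u, ← Finset.mul_sum, hzsum, mul_zero]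
    · have hkin : k ∈ (A.erase ℓ).erase b :=
        Finset.mem_erase.mpr ⟨hkb, Finset.mem_erase.mpr ⟨hkl, hkA⟩⟩
      have hterm : ∀ u, β ℓ b * zetaN X pt ℓ (Function.update x k u ℓ) *
            zetaN X pt b (Function.update x k u b) *
            ∏ m ∈ (A.erase ℓ).erase b, (πh m (Function.update x k u m) - π m (Function.update x k u m))
          = (β ℓ b * zetaN X pt ℓ (x ℓ) * zetaN X pt b (x b) *
              ∏ m ∈ ((A.erase ℓ).erase b).erase k, (πh m (x m) - π m (x m)))
            * (πh k u - π k u) := by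
        intro u
        rw [Function.update_of_ne (fun h => hkl h.symm), Function.update_of_ne (fun h => hkb h.symm)]
        rw [← Finset.mul_prod_erase _ _ hkin, Function.update_self]
        rw [prod_update_eq (s := ((A.erase ℓ).erase b).erase k)
          (fun hm => (Finset.mem_erase.mp hm).1 rfl) (fun m v => πh m v - π m v)]
        ring
      rw [Finset.sum_congr rfl fun u _ => hterm u, ← Finset.mul_sum, hdsum, mul_zero]


lemma sdiff_insert_eq (n k : ℕ) (K : Finset ℕ) :
    Icc 1 n \ insert k K = (Icc 1 n \ K).erase k := by
  ext m
  simp only [Finset.mem_sdiff, Finset.mem_insert, Finset.mem_erase]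
  tauto

lemma phi (n : ℕ) (X : ℕ → Finset ℝ) (π πh pt : ℕ → ℝ → ℝ) (β : ℕ → ℕ → ℝ)
    (hπ_sum : ∀ i ∈ Icc 1 n, ∑ x ∈ X i, π i x = 1)
    (hz_sum : ∀ i ∈ Icc 1 n, ∑ u ∈ X i, zetaN X pt i u = 0)
    (hd_sum : ∀ i ∈ Icc 1 n, ∑ u ∈ X i, (πh i u - π i u) = 0)
    (L₁ L₂ : Finset ℕ → ℕ)
    (hL₁ : ∀ A : Finset ℕ, A ⊆ Icc 1 n → 2 ≤ A.card → L₁ A ∈ A)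
    (hL₂ : ∀ A : Finset ℕ, A ⊆ Icc 1 n → 2 ≤ A.card → L₂ A ∈ A)
    (base : ∀ x : ℕ → ℝ, (∀ i ∈ Icc 1 n, x i ∈ X i) →
      ∑ A ∈ (Icc 1 n).powerset.filter (fun A => 2 ≤ A.card),
        (inner2 X pt π πh β A (L₁ A) x - inner2 X pt π πh β A (L₂ A) x) *
          ∏ k ∈ Icc 1 n \ A, π k (x k) = 0) :
    ∀ K : Finset ℕ, K ⊆ Icc 1 n → ∀ x : ℕ → ℝ, (∀ i ∈ Icc 1 n, x i ∈ X i) →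
      ∑ A ∈ (Icc 1 n \ K).powerset.filter (fun A => 2 ≤ A.card),
        (inner2 X pt π πh β A (L₁ A) x - inner2 X pt π πh β A (L₂ A) x) *
          ∏ k ∈ (Icc 1 n \ K) \ A, π k (x k) = 0 := by
  intro K
  induction K using Finset.induction_on with
  | empty =>
    intro _ x hx
    rw [Finset.sdiff_empty]
    exact base x hx
  | @insert k K hkK ih =>
    intro hsub x hx
    have hkI : k ∈ Icc 1 n := hsub (Finset.mem_insert_self _ _)
    have hKsub : K ⊆ Icc 1 n := fun m hm => hsub (Finset.mem_insert_of_mem hm)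
    have hkW : k ∈ Icc 1 n \ K := Finset.mem_sdiff.mpr ⟨hkI, hkK⟩
    have hupd : ∀ u ∈ X k, ∀ i ∈ Icc 1 n, Function.update x k u i ∈ X i := by
      intro u hu i hi
      by_cases hik : i = k
      · subst hik; rw [Function.update_self]; exact hu
      · rw [Function.update_of_ne hik]; exact hx i hi
    have key : ∑ u ∈ X k,
        ∑ A ∈ ((Icc 1 n \ K).powerset.filter (fun A => 2 ≤ A.card)),
          (inner2 X pt π πh β A (L₁ A) (Function.update x k u)
            - inner2 X pt π πh β A (L₂ A) (Function.update x k u)) *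
            ∏ m ∈ (Icc 1 n \ K) \ A, π m (Function.update x k u m) = 0 :=
      Finset.sum_eq_zero fun u hu => ih hKsub (Function.update x k u) (hupd u hu)
    rw [Finset.sum_comm] at key
    rw [← Finset.sum_filter_add_sum_filter_not
      ((Icc 1 n \ K).powerset.filter (fun A => 2 ≤ A.card)) (fun A => k ∈ A)] at key
    have hz : ∑ A ∈ ((Icc 1 n \ K).powerset.filter (fun A => 2 ≤ A.card)).filter (fun A => k ∈ A),
        ∑ u ∈ X k, (inner2 X pt π πh β A (L₁ A) (Function.update x k u)
            - inner2 X pt π πh β A (L₂ A) (Function.update x k u)) *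
            ∏ m ∈ (Icc 1 n \ K) \ A, π m (Function.update x k u m) = 0 := by
      apply Finset.sum_eq_zero
      intro A hA
      rw [Finset.mem_filter, Finset.mem_filter, Finset.mem_powerset] at hA
      obtain ⟨⟨hAW, hAcard⟩, hkA⟩ := hA
      have hAI : A ⊆ Icc 1 n := hAW.trans (Finset.sdiff_subset)
      have hknW : k ∉ (Icc 1 n \ K) \ A := fun h => (Finset.mem_sdiff.mp h).2 hkA
      have hCP : ∀ u, ∏ m ∈ (Icc 1 n \ K) \ A, π m (Function.update x k u m)
          = ∏ m ∈ (Icc 1 n \ K) \ A, π m (x m) := fun u => prod_update_eq hknW π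
      calc ∑ u ∈ X k, (inner2 X pt π πh β A (L₁ A) (Function.update x k u)
            - inner2 X pt π πh β A (L₂ A) (Function.update x k u)) *
            ∏ m ∈ (Icc 1 n \ K) \ A, π m (Function.update x k u m)
          = (∑ u ∈ X k, (inner2 X pt π πh β A (L₁ A) (Function.update x k u)
            - inner2 X pt π πh β A (L₂ A) (Function.update x k u))) *
            ∏ m ∈ (Icc 1 n \ K) \ A, π m (x m) := by
            rw [Finset.sum_mul]
            exact Finset.sum_congr rfl fun u _ => by rw [hCP u]
        _ = 0 := by
            rw [Finset.sum_sub_distrib]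
            rw [inner2_sum_update_zero x (hz_sum k hkI) (hd_sum k hkI) hkA (hL₁ A hAI hAcard)]
            rw [inner2_sum_update_zero x (hz_sum k hkI) (hd_sum k hkI) hkA (hL₂ A hAI hAcard)]
            simp
    rw [hz, zero_add] at key
    have hfilt : ((Icc 1 n \ K).powerset.filter (fun A => 2 ≤ A.card)).filter (fun A => ¬ k ∈ A)
        = ((Icc 1 n \ insert k K).powerset.filter (fun A => 2 ≤ A.card)) := by
      rw [sdiff_insert_eq]
      ext A
      simp only [Finset.mem_filter, Finset.mem_powerset, Finset.subset_erase]
      tauto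
    rw [hfilt] at key
    rw [← key]
    apply Finset.sum_congr rfl
    intro A hA
    rw [Finset.mem_filter, Finset.mem_powerset, sdiff_insert_eq, Finset.subset_erase] at hA
    obtain ⟨⟨hAW, hkA⟩, hAcard⟩ := hA
    have hAI : A ⊆ Icc 1 n := hAW.trans (Finset.sdiff_subset)
    have hkWA : k ∈ (Icc 1 n \ K) \ A := Finset.mem_sdiff.mpr ⟨hkW, hkA⟩
    have hcong : ∀ u, ∀ ℓ, ℓ ∈ A → inner2 X pt π πh β A ℓ (Function.update x k u)
        = inner2 X pt π πh β A ℓ x := by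
      intro u ℓ hℓ
      refine inner2_congr hℓ fun m hm => ?_
      have hmk : m ≠ k := fun h => hkA (h ▸ hm)
      exact Function.update_of_ne hmk _ _
    have hval : ∀ u, (inner2 X pt π πh β A (L₁ A) (Function.update x k u)
          - inner2 X pt π πh β A (L₂ A) (Function.update x k u)) *
          ∏ m ∈ (Icc 1 n \ K) \ A, π m (Function.update x k u m)
        = ((inner2 X pt π πh β A (L₁ A) x - inner2 X pt π πh β A (L₂ A) x) *
            ∏ m ∈ ((Icc 1 n \ K) \ A).erase k, π m (x m)) * π k u := by
      intro u
      rw [hcong u _ (hL₁ A hAI hAcard), hcong u _ (hL₂ A hAI hAcard)]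
      rw [← Finset.mul_prod_erase _ _ hkWA, Function.update_self]
      rw [prod_update_eq (s := ((Icc 1 n \ K) \ A).erase k)
        (fun hm => (Finset.mem_erase.mp hm).1 rfl) π]
      ring
    have hset : (Icc 1 n \ insert k K) \ A = ((Icc 1 n \ K) \ A).erase k := by
      rw [sdiff_insert_eq]
      ext m
      simp only [Finset.mem_sdiff, Finset.mem_erase]
      tauto
    rw [Finset.sum_congr rfl fun u _ => hval u, ← Finset.mul_sum, hπ_sum k hkI, mul_one, hset]


lemma knw_expand (X : ℕ → Finset ℝ) (π πh pt : ℕ → ℝ → ℝ) (β : ℕ → ℕ → ℝ) (n : ℕ)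
    (σ : Equiv.Perm ℕ) (hσ : ∀ p ∈ Icc 1 n, σ p ∈ Icc 1 n) (x : ℕ → ℝ) :
    knwClosedF X π πh pt β n σ x
    = (∏ a ∈ Icc 1 n, π a (x a)) +
      ∑ A ∈ (Icc 1 n).powerset.filter (fun A => 2 ≤ A.card),
        inner2 X pt π πh β A (lastF σ A) x * ∏ k ∈ Icc 1 n \ A, π k (x k) := by
  unfold knwClosedF
  congr 1
  · have h := Finset.prod_image (s := Icc 1 n) (g := ⇑σ) (f := fun a => π a (x a))
      (fun a _ b _ h => σ.injective h)
    rw [image_Icc n σ hσ] at h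
    exact h.symm
  · exact expansion n (fun k => π k (x k)) (fun k => zetaN X pt k (x k))
      (fun k => πh k (x k) - π k (x k)) (fun k => πh k (x k)) β σ hσ (fun k => by ring)

lemma perm_bijOn (n : ℕ) (σ : Equiv.Perm ℕ) (hσ : ∀ p ∈ Icc 1 n, σ p ∈ Icc 1 n) :
    Set.BijOn (⇑σ) (Set.Icc 1 n) (Set.Icc 1 n) := by
  have hmem : ∀ p : ℕ, p ∈ Set.Icc 1 n ↔ p ∈ Icc 1 n := by
    intro p; rw [Finset.mem_Icc, Set.mem_Icc]
  refine ⟨?_, fun p _ q _ h => σ.injective h, ?_⟩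
  · intro p hp
    rw [hmem] at hp ⊢
    exact hσ p hp
  · intro m hm
    rw [hmem] at hm
    refine ⟨σ.symm m, ?_, σ.apply_symm_apply m⟩
    rw [hmem]
    exact symm_mem_Icc n σ hσ hm

lemma lastF_refl (A : Finset ℕ) : lastF (Equiv.refl ℕ) A = A.sup id := by
  simp [lastF]

lemma base_of_perm (X : ℕ → Finset ℝ) (π πh pt : ℕ → ℝ → ℝ) (β : ℕ → ℕ → ℝ) (n : ℕ)
    (hperm : ∀ g : ℕ → ℕ, Set.BijOn g (Set.Icc 1 n) (Set.Icc 1 n) →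
      ∀ x : ℕ → ℝ, (∀ i ∈ Finset.Icc 1 n, x i ∈ X i) →
        knwClosedF X π πh pt β n g x = knwClosedF X π πh pt β n id x)
    (σ : Equiv.Perm ℕ) (hσ : ∀ p ∈ Icc 1 n, σ p ∈ Icc 1 n)
    (x : ℕ → ℝ) (hx : ∀ i ∈ Finset.Icc 1 n, x i ∈ X i) :
    ∑ A ∈ (Icc 1 n).powerset.filter (fun A => 2 ≤ A.card),
      (inner2 X pt π πh β A (lastF σ A) x - inner2 X pt π πh β A (lastF (Equiv.refl ℕ) A) x) *
        ∏ k ∈ Icc 1 n \ A, π k (x k) = 0 := by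
  have h1 : knwClosedF X π πh pt β n (⇑σ) x = knwClosedF X π πh pt β n id x :=
    hperm (⇑σ) (perm_bijOn n σ hσ) x hx
  have h2 : knwClosedF X π πh pt β n (⇑(Equiv.refl ℕ)) x = knwClosedF X π πh pt β n id x := by
    rw [Equiv.coe_refl]
  rw [knw_expand X π πh pt β n σ hσ x] at h1
  rw [knw_expand X π πh pt β n (Equiv.refl ℕ) (fun p hp => hp) x] at h2
  have h3 := h1.trans h2.symm
  have h4 := add_left_cancel h3
  simp only [sub_mul]
  rw [Finset.sum_sub_distrib]
  exact sub_eq_zero.mpr h4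

section Triple

variable {a b c : ℕ} (hab : a < b) (hbc : b < c)

lemma triple_sup (hab : a < b) (hbc : b < c) : ({a, b, c} : Finset ℕ).sup id = c := by
  simp only [Finset.sup_insert, Finset.sup_singleton, id_eq]
  omega

lemma triple_card (hab : a < b) (hbc : b < c) : ({a, b, c} : Finset ℕ).card = 3 := by
  rw [Finset.card_insert_of_notMem (by simp; omega),
    Finset.card_insert_of_notMem (by simp; omega), Finset.card_singleton]

lemma triple_image_swap_ac (hab : a < b) (hbc : b < c) :
    ({a, b, c} : Finset ℕ).image (Equiv.swap a c) = {a, b, c} := by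
  simp only [Finset.image_insert, Finset.image_singleton, Equiv.swap_apply_left,
    Equiv.swap_apply_right, Equiv.swap_apply_of_ne_of_ne (by omega : b ≠ a) (by omega : b ≠ c)]
  ext m
  simp only [Finset.mem_insert, Finset.mem_singleton]
  tauto

lemma triple_image_swap_bc (hab : a < b) (hbc : b < c) :
    ({a, b, c} : Finset ℕ).image (Equiv.swap b c) = {a, b, c} := by
  simp only [Finset.image_insert, Finset.image_singleton, Equiv.swap_apply_left,
    Equiv.swap_apply_right, Equiv.swap_apply_of_ne_of_ne (by omega : a ≠ b) (by omega : a ≠ c)]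
  ext m
  simp only [Finset.mem_insert, Finset.mem_singleton]
  tauto

lemma lastF_swap_ac (hab : a < b) (hbc : b < c) :
    lastF (Equiv.swap a c) {a, b, c} = a := by
  rw [lastF, Equiv.symm_swap, triple_image_swap_ac hab hbc, triple_sup hab hbc,
    Equiv.swap_apply_right]

lemma lastF_swap_bc (hab : a < b) (hbc : b < c) :
    lastF (Equiv.swap b c) {a, b, c} = b := by
  rw [lastF, Equiv.symm_swap, triple_image_swap_bc hab hbc, triple_sup hab hbc,
    Equiv.swap_apply_right]

lemma triple_erase_a (hab : a < b) (hbc : b < c) :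
    ({a, b, c} : Finset ℕ).erase a = {b, c} :=
  Finset.erase_insert (by simp; omega)

lemma triple_erase_b (hab : a < b) (hbc : b < c) :
    ({a, b, c} : Finset ℕ).erase b = {a, c} := by
  ext m
  simp only [Finset.mem_erase, Finset.mem_insert, Finset.mem_singleton]
  constructor
  · rintro ⟨h1, h2 | h2 | h2⟩ <;> omega
  · rintro (h | h) <;> constructor <;> omega
  
lemma triple_erase_c (hab : a < b) (hbc : b < c) :
    ({a, b, c} : Finset ℕ).erase c = {a, b} := by
  ext m
  simp only [Finset.mem_erase, Finset.mem_insert, Finset.mem_singleton]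
  constructor
  · rintro ⟨h1, h2 | h2 | h2⟩ <;> omega
  · rintro (h | h) <;> constructor <;> omega

lemma pair_erase_left {p q : ℕ} (hpq : p ≠ q) : ({p, q} : Finset ℕ).erase p = {q} :=
  Finset.erase_insert (by simpa using fun h => hpq h)

lemma pair_erase_right {p q : ℕ} (hpq : p ≠ q) : ({p, q} : Finset ℕ).erase q = {p} := by
  rw [Finset.pair_comm]
  exact pair_erase_left (Ne.symm hpq)

end Triple

lemma inner2_pair {X : ℕ → Finset ℝ} {pt π πh : ℕ → ℝ → ℝ} {β : ℕ → ℕ → ℝ}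
    {p q ℓ : ℕ} (hpq : p ≠ q) (hβs : β p q = β q p) (hℓ : ℓ ∈ ({p, q} : Finset ℕ)) (x : ℕ → ℝ) :
    inner2 X pt π πh β {p, q} ℓ x = β p q * zetaN X pt p (x p) * zetaN X pt q (x q) := by
  rw [Finset.mem_insert, Finset.mem_singleton] at hℓ
  rcases hℓ with rfl | rfl
  · rw [inner2, innerC, pair_erase_left hpq, Finset.sum_singleton, Finset.erase_singleton,
      Finset.prod_empty, mul_one]
  · rw [inner2, innerC, pair_erase_right hpq, Finset.sum_singleton, Finset.erase_singleton,
      Finset.prod_empty, mul_one, hβs]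
    ring

lemma inner2_triple_eval {X : ℕ → Finset ℝ} {pt π πh : ℕ → ℝ → ℝ} {β : ℕ → ℕ → ℝ}
    {a b c : ℕ} (hab : a < b) (hbc : b < c) (x : ℕ → ℝ) :
    inner2 X pt π πh β {a, b, c} a x
      = β a b * zetaN X pt a (x a) * zetaN X pt b (x b) * (πh c (x c) - π c (x c))
        + β a c * zetaN X pt a (x a) * zetaN X pt c (x c) * (πh b (x b) - π b (x b)) ∧
    inner2 X pt π πh β {a, b, c} b x
      = β b a * zetaN X pt b (x b) * zetaN X pt a (x a) * (πh c (x c) - π c (x c))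
        + β b c * zetaN X pt b (x b) * zetaN X pt c (x c) * (πh a (x a) - π a (x a)) ∧
    inner2 X pt π πh β {a, b, c} c x
      = β c a * zetaN X pt c (x c) * zetaN X pt a (x a) * (πh b (x b) - π b (x b))
        + β c b * zetaN X pt c (x c) * zetaN X pt b (x b) * (πh a (x a) - π a (x a)) := by
  refine ⟨?_, ?_, ?_⟩
  · rw [inner2, innerC, triple_erase_a hab hbc, Finset.sum_insert (by simp; omega),
      Finset.sum_singleton, pair_erase_left (by omega : b ≠ c),
      pair_erase_right (by omega : b ≠ c), Finset.prod_singleton, Finset.prod_singleton]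
  · rw [inner2, innerC, triple_erase_b hab hbc, Finset.sum_insert (by simp; omega),
      Finset.sum_singleton, pair_erase_left (by omega : a ≠ c),
      pair_erase_right (by omega : a ≠ c), Finset.prod_singleton, Finset.prod_singleton]
  · rw [inner2, innerC, triple_erase_c hab hbc, Finset.sum_insert (by simp; omega),
      Finset.sum_singleton, pair_erase_left (by omega : a ≠ b),
      pair_erase_right (by omega : a ≠ b), Finset.prod_singleton, Finset.prod_singleton]


lemma swap_maps (n d e : ℕ) (hd : d ∈ Icc 1 n) (he : e ∈ Icc 1 n) :
    ∀ p ∈ Icc 1 n, Equiv.swap d e p ∈ Icc 1 n := by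
  intro p hp
  rcases eq_or_ne p d with rfl | h1
  · rw [Equiv.swap_apply_left]; exact he
  rcases eq_or_ne p e with rfl | h2
  · rw [Equiv.swap_apply_right]; exact hd
  · rw [Equiv.swap_apply_of_ne_of_ne h1 h2]; exact hp

lemma triple_rel (n : ℕ) (X : ℕ → Finset ℝ) (π πh pt : ℕ → ℝ → ℝ) (β : ℕ → ℕ → ℝ)
    (hπ_sum : ∀ i ∈ Icc 1 n, ∑ x ∈ X i, π i x = 1)
    (hz_sum : ∀ i ∈ Icc 1 n, ∑ u ∈ X i, zetaN X pt i u = 0)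
    (hd_sum : ∀ i ∈ Icc 1 n, ∑ u ∈ X i, (πh i u - π i u) = 0)
    (hβ_symm : ∀ i ∈ Finset.Icc 1 n, ∀ j ∈ Finset.Icc 1 n, β i j = β j i)
    (hperm : ∀ g : ℕ → ℕ, Set.BijOn g (Set.Icc 1 n) (Set.Icc 1 n) →
      ∀ x : ℕ → ℝ, (∀ i ∈ Finset.Icc 1 n, x i ∈ X i) →
        knwClosedF X π πh pt β n g x = knwClosedF X π πh pt β n id x)
    {a b c : ℕ} (ha1 : 1 ≤ a) (hab : a < b) (hbc : b < c) (hcn : c ≤ n)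
    (x : ℕ → ℝ) (hx : ∀ i ∈ Finset.Icc 1 n, x i ∈ X i) :
    inner2 X pt π πh β {a, b, c} a x = inner2 X pt π πh β {a, b, c} c x ∧
    inner2 X pt π πh β {a, b, c} b x = inner2 X pt π πh β {a, b, c} c x := by
  have hTsub : ({a, b, c} : Finset ℕ) ⊆ Icc 1 n := by
    intro m hm
    rw [Finset.mem_insert, Finset.mem_insert, Finset.mem_singleton] at hm
    rw [Finset.mem_Icc]
    rcases hm with rfl | rfl | rfl <;> omega
  have haI : a ∈ Icc 1 n := hTsub (Finset.mem_insert_self _ _)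
  have hbI : b ∈ Icc 1 n := hTsub (by simp)
  have hcI : c ∈ Icc 1 n := hTsub (by simp)
  have hWW : Icc 1 n \ (Icc 1 n \ ({a, b, c} : Finset ℕ)) = {a, b, c} := by
    ext m
    simp only [Finset.mem_sdiff, Finset.mem_insert, Finset.mem_singleton]
    have := hTsub
    constructor
    · tauto
    · intro hm
      refine ⟨hTsub (by simp only [Finset.mem_insert, Finset.mem_singleton]; tauto), ?_⟩
      tauto
  have hTmem : ({a, b, c} : Finset ℕ) ∈
      (({a, b, c} : Finset ℕ)).powerset.filter (fun A => 2 ≤ A.card) := by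
    rw [Finset.mem_filter, Finset.mem_powerset, triple_card hab hbc]
    exact ⟨Finset.Subset.refl _, by omega⟩
  have main : ∀ σ : Equiv.Perm ℕ, (∀ p ∈ Icc 1 n, σ p ∈ Icc 1 n) →
      inner2 X pt π πh β {a, b, c} (lastF σ {a, b, c}) x
        = inner2 X pt π πh β {a, b, c} (lastF (Equiv.refl ℕ) {a, b, c}) x := by
    intro σ hσ
    have hL : ∀ τ : Equiv.Perm ℕ, ∀ A : Finset ℕ, A ⊆ Icc 1 n → 2 ≤ A.card → lastF τ A ∈ A :=
      fun τ A _ hc => lastF_mem τ (Finset.card_pos.mp (by omega))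
    have hphi := phi n X π πh pt β hπ_sum hz_sum hd_sum (lastF σ) (lastF (Equiv.refl ℕ))
      (hL σ) (hL (Equiv.refl ℕ))
      (fun y hy => base_of_perm X π πh pt β n hperm σ hσ y hy)
      (Icc 1 n \ ({a, b, c} : Finset ℕ)) (Finset.sdiff_subset) x hx
    rw [hWW] at hphi
    have hz0 : ∀ A ∈ (({a, b, c} : Finset ℕ)).powerset.filter (fun A => 2 ≤ A.card),
        A ≠ ({a, b, c} : Finset ℕ) →
        (inner2 X pt π πh β A (lastF σ A) x - inner2 X pt π πh β A (lastF (Equiv.refl ℕ) A) x) *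
          ∏ k ∈ ({a, b, c} : Finset ℕ) \ A, π k (x k) = 0 := by
      intro A hA hne
      rw [Finset.mem_filter, Finset.mem_powerset] at hA
      have hlt : A.card < 3 := by
        rw [← triple_card hab hbc]
        exact Finset.card_lt_card ((Finset.ssubset_iff_subset_ne).mpr ⟨hA.1, hne⟩)
      have hA2 : A.card = 2 := by omega
      obtain ⟨p, q, hpq, rfl⟩ := Finset.card_eq_two.mp hA2
      have hpI : p ∈ Icc 1 n := hTsub (hA.1 (Finset.mem_insert_self _ _))
      have hqI : q ∈ Icc 1 n := hTsub (hA.1 (by simp))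
      have hβs : β p q = β q p := hβ_symm p hpI q hqI
      rw [inner2_pair hpq hβs (hL σ _ (hA.1.trans hTsub) hA.2) x,
        inner2_pair hpq hβs (hL (Equiv.refl ℕ) _ (hA.1.trans hTsub) hA.2) x,
        sub_self, zero_mul]
    have hsingle := Finset.sum_eq_single_of_mem _ hTmem hz0
    rw [hphi] at hsingle
    rw [Finset.sdiff_self, Finset.prod_empty, mul_one] at hsingle
    exact sub_eq_zero.mp hsingle.symm
  constructor
  · have h := main (Equiv.swap a c) (swap_maps n a c haI hcI)
    rwa [lastF_swap_ac hab hbc, lastF_refl, triple_sup hab hbc] at h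
  · have h := main (Equiv.swap b c) (swap_maps n b c hbI hcI)
    rwa [lastF_swap_bc hab hbc, lastF_refl, triple_sup hab hbc] at h

noncomputable def gridPt (X : ℕ → Finset ℝ) : ℕ → ℝ :=
  fun k => if h : (X k).Nonempty then h.choose else 0

lemma gridPt_mem {X : ℕ → Finset ℝ} {k : ℕ} (h : (X k).Nonempty) : gridPt X k ∈ X k := by
  rw [gridPt, dif_pos h]
  exact h.choose_spec

lemma triple_bilinear (n : ℕ) (X : ℕ → Finset ℝ) (π πh pt : ℕ → ℝ → ℝ) (β : ℕ → ℕ → ℝ)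
    (hXne : ∀ i ∈ Finset.Icc 1 n, (X i).Nonempty)
    (hπ_sum : ∀ i ∈ Icc 1 n, ∑ x ∈ X i, π i x = 1)
    (hz_sum : ∀ i ∈ Icc 1 n, ∑ u ∈ X i, zetaN X pt i u = 0)
    (hd_sum : ∀ i ∈ Icc 1 n, ∑ u ∈ X i, (πh i u - π i u) = 0)
    (hβ_symm : ∀ i ∈ Finset.Icc 1 n, ∀ j ∈ Finset.Icc 1 n, β i j = β j i)
    (hperm : ∀ g : ℕ → ℕ, Set.BijOn g (Set.Icc 1 n) (Set.Icc 1 n) →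
      ∀ x : ℕ → ℝ, (∀ i ∈ Finset.Icc 1 n, x i ∈ X i) →
        knwClosedF X π πh pt β n g x = knwClosedF X π πh pt β n id x)
    {a b c : ℕ} (ha1 : 1 ≤ a) (hab : a < b) (hbc : b < c) (hcn : c ≤ n)
    {u v w : ℝ} (hu : u ∈ X a) (hv : v ∈ X b) (hw : w ∈ X c) :
    (β a b * zetaN X pt a u * zetaN X pt b v * (πh c w - π c w)
      = β c b * zetaN X pt c w * zetaN X pt b v * (πh a u - π a u)) ∧
    (β a c * zetaN X pt a u * zetaN X pt c w * (πh b v - π b v)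
      = β b c * zetaN X pt b v * zetaN X pt c w * (πh a u - π a u)) := by
  set x : ℕ → ℝ :=
    Function.update (Function.update (Function.update (gridPt X) a u) b v) c w with hxdef
  have hx : ∀ i ∈ Finset.Icc 1 n, x i ∈ X i := by
    intro i hi
    rcases eq_or_ne i c with rfl | hic
    · rw [hxdef, Function.update_self]; exact hw
    rcases eq_or_ne i b with rfl | hib
    · rw [hxdef, Function.update_of_ne hic, Function.update_self]; exact hv
    rcases eq_or_ne i a with rfl | hia
    · rw [hxdef, Function.update_of_ne hic, Function.update_of_ne hib, Function.update_self]
      exact hu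
    · rw [hxdef, Function.update_of_ne hic, Function.update_of_ne hib,
        Function.update_of_ne hia]
      exact gridPt_mem (hXne i hi)
  have hxa : x a = u := by
    rw [hxdef, Function.update_of_ne (by omega : a ≠ c), Function.update_of_ne (by omega : a ≠ b),
      Function.update_self]
  have hxb : x b = v := by
    rw [hxdef, Function.update_of_ne (by omega : b ≠ c), Function.update_self]
  have hxc : x c = w := by rw [hxdef, Function.update_self]
  obtain ⟨h1, h2⟩ := triple_rel n X π πh pt β hπ_sum hz_sum hd_sum hβ_symm hperm
    ha1 hab hbc hcn x hx
  obtain ⟨ea, eb, ec⟩ := inner2_triple_eval (X := X) (pt := pt) (π := π) (πh := πh) (β := β)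
    hab hbc x
  rw [ea, ec] at h1
  rw [eb, ec] at h2
  rw [hxa, hxb, hxc] at h1 h2
  have hTsub : ({a, b, c} : Finset ℕ) ⊆ Icc 1 n := by
    intro m hm
    rw [Finset.mem_insert, Finset.mem_insert, Finset.mem_singleton] at hm
    rw [Finset.mem_Icc]
    rcases hm with rfl | rfl | rfl <;> omega
  have haI : a ∈ Icc 1 n := hTsub (Finset.mem_insert_self _ _)
  have hbI : b ∈ Icc 1 n := hTsub (by simp)
  have hcI : c ∈ Icc 1 n := hTsub (by simp)
  have hac : β a c = β c a := hβ_symm a haI c hcI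
  have hab' : β a b = β b a := hβ_symm a haI b hbI
  constructor
  · linear_combination h1 - zetaN X pt a u * zetaN X pt c w * (πh b v - π b v) * hac
  · linear_combination h1 - h2 - zetaN X pt a u * zetaN X pt b v * (πh c w - π c w) * hab'


lemma forward (n : ℕ) (hn : 3 ≤ n)
    (X : ℕ → Finset ℝ) (π πh pt : ℕ → ℝ → ℝ) (β : ℕ → ℕ → ℝ)
    (hXne : ∀ i ∈ Finset.Icc 1 n, (X i).Nonempty)
    (hπ_sum : ∀ i ∈ Finset.Icc 1 n, ∑ x ∈ X i, π i x = 1)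
    (hpt_nn : ∀ i ∈ Finset.Icc 1 n, ∀ x ∈ X i, 0 ≤ pt i x)
    (hpt_sum : ∀ i ∈ Finset.Icc 1 n, ∑ x ∈ X i, pt i x = 1)
    (hpt_nd : ∀ i ∈ Finset.Icc 1 n, 1 < ((X i).filter fun x => pt i x ≠ 0).card)
    (hph_sum : ∀ i ∈ Finset.Icc 1 n, ∑ x ∈ X i, πh i x = 1)
    (hβ_symm : ∀ i ∈ Finset.Icc 1 n, ∀ j ∈ Finset.Icc 1 n, β i j = β j i)
    (hβ_ne : ∀ i ∈ Finset.Icc 1 n, ∀ j ∈ Finset.Icc 1 n, i ≠ j → β i j ≠ 0)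
    (xc : ℝ) (hxc : xc ∈ X 1) (hζxc : zetaN X pt 1 xc ≠ 0)
    (hcorr : 4 ≤ n →
      ∀ i ∈ Finset.Icc 1 n, ∀ j ∈ Finset.Icc 1 n, ∀ k ∈ Finset.Icc 1 n, ∀ l ∈ Finset.Icc 1 n,
        i ≠ j → i ≠ k → i ≠ l → j ≠ k → j ≠ l → k ≠ l →
        β i j * β k l = β i l * β j k ∧ β i l * β j k = β i k * β j l)
    (hperm : ∀ g : ℕ → ℕ, Set.BijOn g (Set.Icc 1 n) (Set.Icc 1 n) →
      ∀ x : ℕ → ℝ, (∀ i ∈ Finset.Icc 1 n, x i ∈ X i) →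
        knwClosedF X π πh pt β n g x = knwClosedF X π πh pt β n id x) :
    ((∀ x ∈ X 1,
        πh 1 x - π 1 x = zetaN X pt 1 x * (πh 1 xc - π 1 xc) / zetaN X pt 1 xc) ∧
     (∀ i ∈ Finset.Icc 2 (n - 1), ∀ x ∈ X i,
        πh i x - π i x =
          β i n * zetaN X pt i x * (πh 1 xc - π 1 xc) / (β 1 n * zetaN X pt 1 xc)) ∧
     (∀ x ∈ X n,
        πh n x - π n x =
          β 2 n * zetaN X pt n x * (πh 1 xc - π 1 xc) / (β 1 2 * zetaN X pt 1 xc))) := by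
  have hz_sum : ∀ i ∈ Icc 1 n, ∑ u ∈ X i, zetaN X pt i u = 0 :=
    fun i hi => zeta_sum_zero X pt (hpt_sum i hi)
  have hd_sum : ∀ i ∈ Icc 1 n, ∑ u ∈ X i, (πh i u - π i u) = 0 := fun i hi => by
    rw [Finset.sum_sub_distrib, hph_sum i hi, hπ_sum i hi, sub_self]
  have h1I : (1:ℕ) ∈ Icc 1 n := by rw [Finset.mem_Icc]; omega
  have h2I : (2:ℕ) ∈ Icc 1 n := by rw [Finset.mem_Icc]; omega
  have h3I : (3:ℕ) ∈ Icc 1 n := by rw [Finset.mem_Icc]; omega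
  have hnI : n ∈ Icc 1 n := by rw [Finset.mem_Icc]; omega
  have hβ1n : β 1 n ≠ 0 := hβ_ne 1 h1I n hnI (by omega)
  have hB2 : ∀ i ∈ Finset.Icc 2 (n - 1), ∀ y ∈ X i,
      πh i y - π i y = β i n * zetaN X pt i y * (πh 1 xc - π 1 xc)
        / (β 1 n * zetaN X pt 1 xc) := by
    intro i hi y hy
    rw [Finset.mem_Icc] at hi
    obtain ⟨w0, hw0, hzw0⟩ := zeta_exists_ne X pt (hpt_nn n hnI) (hpt_nd n hnI)
    have hbil := (triple_bilinear n X π πh pt β hXne hπ_sum hz_sum hd_sum hβ_symm hperm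
      (le_refl 1) (by omega : 1 < i) (by omega : i < n) (le_refl n) hxc hy hw0).2
    have key : β 1 n * zetaN X pt 1 xc * (πh i y - π i y)
        = β i n * zetaN X pt i y * (πh 1 xc - π 1 xc) := by
      have hfac : (β 1 n * zetaN X pt 1 xc * (πh i y - π i y)
          - β i n * zetaN X pt i y * (πh 1 xc - π 1 xc)) * zetaN X pt n w0 = 0 := by
        linear_combination hbil
      rcases mul_eq_zero.mp hfac with h | h
      · exact sub_eq_zero.mp h
      · exact absurd h hzw0
    rw [eq_div_iff (mul_ne_zero hβ1n hζxc)]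
    linear_combination key
  have hB3 : ∀ y ∈ X n,
      πh n y - π n y = β 2 n * zetaN X pt n y * (πh 1 xc - π 1 xc)
        / (β 1 2 * zetaN X pt 1 xc) := by
    intro y hy
    obtain ⟨v0, hv0, hzv0⟩ := zeta_exists_ne X pt (hpt_nn 2 h2I) (hpt_nd 2 h2I)
    have hbil := (triple_bilinear n X π πh pt β hXne hπ_sum hz_sum hd_sum hβ_symm hperm
      (le_refl 1) (by omega : 1 < 2) (by omega : 2 < n) (le_refl n) hxc hv0 hy).1
    have hs : β n 2 = β 2 n := hβ_symm n hnI 2 h2I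
    have key : β 1 2 * zetaN X pt 1 xc * (πh n y - π n y)
        = β 2 n * zetaN X pt n y * (πh 1 xc - π 1 xc) := by
      have hfac : (β 1 2 * zetaN X pt 1 xc * (πh n y - π n y)
          - β n 2 * zetaN X pt n y * (πh 1 xc - π 1 xc)) * zetaN X pt 2 v0 = 0 := by
        linear_combination hbil
      rcases mul_eq_zero.mp hfac with h | h
      · linear_combination (sub_eq_zero.mp h) + zetaN X pt n y * (πh 1 xc - π 1 xc) * hs
      · exact absurd h hzv0
    have hβ12 : β 1 2 ≠ 0 := hβ_ne 1 h1I 2 h2I (by omega)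
    rw [eq_div_iff (mul_ne_zero hβ12 hζxc)]
    linear_combination key
  have hB1 : ∀ y ∈ X 1,
      πh 1 y - π 1 y = zetaN X pt 1 y * (πh 1 xc - π 1 xc) / zetaN X pt 1 xc := by
    intro y hy
    obtain ⟨v0, hv0, hzv0⟩ := zeta_exists_ne X pt (hpt_nn 2 h2I) (hpt_nd 2 h2I)
    obtain ⟨w0, hw0, hzw0⟩ := zeta_exists_ne X pt (hpt_nn 3 h3I) (hpt_nd 3 h3I)
    have hbil := (triple_bilinear n X π πh pt β hXne hπ_sum hz_sum hd_sum hβ_symm hperm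
      (le_refl 1) (by omega : 1 < 2) (by omega : 2 < 3) (by omega : 3 ≤ n) hy hv0 hw0).2
    have hstar : β 1 3 * zetaN X pt 1 y * (πh 2 v0 - π 2 v0)
        = β 2 3 * zetaN X pt 2 v0 * (πh 1 y - π 1 y) := by
      have hfac : (β 1 3 * zetaN X pt 1 y * (πh 2 v0 - π 2 v0)
          - β 2 3 * zetaN X pt 2 v0 * (πh 1 y - π 1 y)) * zetaN X pt 3 w0 = 0 := by
        linear_combination hbil
      rcases mul_eq_zero.mp hfac with h | h
      · exact sub_eq_zero.mp h
      · exact absurd h hzw0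
    have hD2 := hB2 2 (by rw [Finset.mem_Icc]; omega) v0 hv0
    have hD2' : (πh 2 v0 - π 2 v0) * (β 1 n * zetaN X pt 1 xc)
        = β 2 n * zetaN X pt 2 v0 * (πh 1 xc - π 1 xc) := by
      rw [hD2]
      field_simp
    have key : β 1 3 * β 2 n = β 2 3 * β 1 n := by
      rcases eq_or_lt_of_le hn with heq | hlt
      · rw [← heq]
        ring
      · obtain ⟨e1, e2⟩ := hcorr (by omega) 1 h1I 2 h2I 3 h3I n hnI (by omega) (by omega)
          (by omega) (by omega) (by omega) (by omega)
        linear_combination -e2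
    have hβ23 : β 2 3 ≠ 0 := hβ_ne 2 h2I 3 h3I (by omega)
    have hbig : (πh 1 y - π 1 y) * zetaN X pt 1 xc * (β 2 3 * β 1 n * zetaN X pt 2 v0)
        = zetaN X pt 1 y * (πh 1 xc - π 1 xc) * (β 2 3 * β 1 n * zetaN X pt 2 v0) := by
      linear_combination (-(β 1 n * zetaN X pt 1 xc)) * hstar
        + (β 1 3 * zetaN X pt 1 y) * hD2'
        + (zetaN X pt 1 y * zetaN X pt 2 v0 * (πh 1 xc - π 1 xc)) * key
    have hcancel := mul_right_cancel₀ (mul_ne_zero (mul_ne_zero hβ23 hβ1n) hzv0) hbig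
    rw [eq_div_iff hζxc]
    linear_combination hcancel
  exact ⟨hB1, hB2, hB3⟩


lemma innerC_invariant (β : ℕ → ℕ → ℝ) (c : ℕ → ℝ) (n : ℕ) {A : Finset ℕ} (hA : A ⊆ Icc 1 n)
    (hβs : ∀ i ∈ Icc 1 n, ∀ j ∈ Icc 1 n, β i j = β j i)
    (hpair : ∀ a ∈ Icc 1 n, ∀ b ∈ Icc 1 n, ∀ m ∈ Icc 1 n,
      a ≠ b → a ≠ m → b ≠ m → β a m * c b = β b m * c a)
    {ℓ₁ ℓ₂ : ℕ} (h1 : ℓ₁ ∈ A) (h2 : ℓ₂ ∈ A) :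
    ∑ b ∈ A.erase ℓ₁, β ℓ₁ b * ∏ k ∈ (A.erase ℓ₁).erase b, c k
      = ∑ b ∈ A.erase ℓ₂, β ℓ₂ b * ∏ k ∈ (A.erase ℓ₂).erase b, c k := by
  rcases eq_or_ne ℓ₁ ℓ₂ with rfl | hne
  · rfl
  have hℓ₂e : ℓ₂ ∈ A.erase ℓ₁ := Finset.mem_erase.mpr ⟨hne.symm, h2⟩
  have hℓ₁e : ℓ₁ ∈ A.erase ℓ₂ := Finset.mem_erase.mpr ⟨hne, h1⟩
  rw [← Finset.add_sum_erase _ _ hℓ₂e, ← Finset.add_sum_erase _ _ hℓ₁e]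
  have hsets : (A.erase ℓ₁).erase ℓ₂ = (A.erase ℓ₂).erase ℓ₁ := Finset.erase_right_comm
  congr 1
  · rw [hsets, hβs ℓ₁ (hA h1) ℓ₂ (hA h2)]
  · rw [hsets]
    refine Finset.sum_congr rfl fun j hj => ?_
    rw [Finset.mem_erase, Finset.mem_erase] at hj
    obtain ⟨hj1, hj2, hjA⟩ := hj
    have hℓ₂j : ℓ₂ ∈ (A.erase ℓ₁).erase j := Finset.mem_erase.mpr ⟨fun h => hj2 h.symm, hℓ₂e⟩
    have hℓ₁j : ℓ₁ ∈ (A.erase ℓ₂).erase j := Finset.mem_erase.mpr ⟨fun h => hj1 h.symm, hℓ₁e⟩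
    rw [← Finset.mul_prod_erase _ _ hℓ₂j, ← Finset.mul_prod_erase _ _ hℓ₁j]
    have hsets2 : ((A.erase ℓ₁).erase j).erase ℓ₂ = ((A.erase ℓ₂).erase j).erase ℓ₁ := by
      rw [Finset.erase_right_comm (a := ℓ₁) (b := j), Finset.erase_right_comm (a := ℓ₂) (b := j),
        Finset.erase_right_comm (a := ℓ₁) (b := ℓ₂)]
    rw [hsets2]
    have hp := hpair ℓ₁ (hA h1) ℓ₂ (hA h2) j (hA hjA) hne (fun h => hj1 h.symm)
      (fun h => hj2 h.symm)
    linear_combination (∏ k ∈ ((A.erase ℓ₂).erase j).erase ℓ₁, c k) * hp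

lemma inner2_factor {X : ℕ → Finset ℝ} {pt π πh : ℕ → ℝ → ℝ} {β : ℕ → ℕ → ℝ} {c : ℕ → ℝ}
    {A : Finset ℕ} {ℓ : ℕ} {x : ℕ → ℝ} (hℓ : ℓ ∈ A)
    (hD : ∀ k ∈ A, πh k (x k) - π k (x k) = c k * zetaN X pt k (x k)) :
    inner2 X pt π πh β A ℓ x
      = (∑ b ∈ A.erase ℓ, β ℓ b * ∏ k ∈ (A.erase ℓ).erase b, c k) *
          ∏ m ∈ A, zetaN X pt m (x m) := by
  rw [inner2, innerC, Finset.sum_mul]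
  refine Finset.sum_congr rfl fun b hb => ?_
  have hprod : ∏ k ∈ (A.erase ℓ).erase b, (πh k (x k) - π k (x k))
      = ∏ k ∈ (A.erase ℓ).erase b, (c k * zetaN X pt k (x k)) :=
    Finset.prod_congr rfl fun k hk =>
      hD k (Finset.mem_of_mem_erase (Finset.mem_of_mem_erase hk))
  rw [hprod, Finset.prod_mul_distrib]
  have hZA : ∏ m ∈ A, zetaN X pt m (x m)
      = zetaN X pt ℓ (x ℓ) * (zetaN X pt b (x b) *
          ∏ k ∈ (A.erase ℓ).erase b, zetaN X pt k (x k)) := by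
    rw [Finset.mul_prod_erase (A.erase ℓ) (fun m => zetaN X pt m (x m)) hb,
      Finset.mul_prod_erase A (fun m => zetaN X pt m (x m)) hℓ]
  rw [hZA]
  ring

lemma knw_congr (X : ℕ → Finset ℝ) (π πh pt : ℕ → ℝ → ℝ) (β : ℕ → ℕ → ℝ) (n : ℕ)
    (g g' : ℕ → ℕ) (h : ∀ p ∈ Icc 1 n, g p = g' p) (x : ℕ → ℝ) :
    knwClosedF X π πh pt β n g x = knwClosedF X π πh pt β n g' x := by
  unfold knwClosedF
  congr 1
  · exact Finset.prod_congr rfl fun i hi => by rw [h i hi]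
  · refine Finset.sum_congr rfl fun i hi => ?_
    rw [Finset.mem_Icc] at hi
    have hiI : i ∈ Icc 1 n := by rw [Finset.mem_Icc]; omega
    have hsub : ∀ j, j ∈ Icc 1 (i-1) → j ∈ Icc 1 n := by
      intro j hj
      rw [Finset.mem_Icc] at hj ⊢
      omega
    congr 1
    · congr 1
      · rw [h i hiI]
      · refine Finset.sum_congr rfl fun j hj => ?_
        rw [h i hiI, h j (hsub j hj)]
        congr 2
        refine Finset.prod_congr rfl fun k hk => ?_
        rw [h k (hsub k (Finset.mem_of_mem_erase hk))]
    · refine Finset.prod_congr rfl fun k hk => ?_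
      rw [Finset.mem_Icc] at hk
      rw [h k (by rw [Finset.mem_Icc]; omega)]

lemma exists_perm_ext (n : ℕ) (g : ℕ → ℕ)
    (hg : Set.BijOn g (Set.Icc 1 n) (Set.Icc 1 n)) :
    ∃ σ : Equiv.Perm ℕ, (∀ p ∈ Icc 1 n, σ p = g p) ∧ (∀ p ∈ Icc 1 n, σ p ∈ Icc 1 n) := by
  classical
  let e : ↥(Set.Icc (1:ℕ) n) ≃ ↥(Set.Icc (1:ℕ) n) := Set.BijOn.equiv g hg
  let σ : Equiv.Perm ℕ := Equiv.Perm.extendDomain e (Equiv.refl _)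
  have happ : ∀ p ∈ Icc 1 n, σ p = g p := by
    intro p hp
    rw [Finset.mem_Icc] at hp
    have hp' : p ∈ Set.Icc (1:ℕ) n := Set.mem_Icc.mpr hp
    have h1 : σ p = ↑((Equiv.refl _) (e ((Equiv.refl _).symm ⟨p, hp'⟩))) :=
      Equiv.Perm.extendDomain_apply_subtype e (Equiv.refl _) hp'
    rw [h1]
    rfl
  refine ⟨σ, happ, ?_⟩
  intro p hp
  rw [happ p hp]
  have := hg.mapsTo (Set.mem_Icc.mpr (Finset.mem_Icc.mp hp))
  rw [Finset.mem_Icc]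
  exact Set.mem_Icc.mp this


noncomputable def cF (β : ℕ → ℕ → ℝ) (n : ℕ) (t Zc : ℝ) : ℕ → ℝ := fun k =>
  if k = n then β 2 n * t / (β 1 2 * Zc) else β k n * t / (β 1 n * Zc)

lemma cF_n {β : ℕ → ℕ → ℝ} {n : ℕ} {t Zc : ℝ} : cF β n t Zc n = β 2 n * t / (β 1 2 * Zc) :=
  if_pos rfl

lemma cF_ne {β : ℕ → ℕ → ℝ} {n : ℕ} {t Zc : ℝ} {k : ℕ} (h : k ≠ n) :
    cF β n t Zc k = β k n * t / (β 1 n * Zc) := if_neg h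

lemma backward (n : ℕ) (hn : 3 ≤ n)
    (X : ℕ → Finset ℝ) (π πh pt : ℕ → ℝ → ℝ) (β : ℕ → ℕ → ℝ)
    (hβ_symm : ∀ i ∈ Finset.Icc 1 n, ∀ j ∈ Finset.Icc 1 n, β i j = β j i)
    (hβ_ne : ∀ i ∈ Finset.Icc 1 n, ∀ j ∈ Finset.Icc 1 n, i ≠ j → β i j ≠ 0)
    (xc : ℝ) (hxc : xc ∈ X 1) (hζxc : zetaN X pt 1 xc ≠ 0)
    (hcorr : 4 ≤ n →
      ∀ i ∈ Finset.Icc 1 n, ∀ j ∈ Finset.Icc 1 n, ∀ k ∈ Finset.Icc 1 n, ∀ l ∈ Finset.Icc 1 n,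
        i ≠ j → i ≠ k → i ≠ l → j ≠ k → j ≠ l → k ≠ l →
        β i j * β k l = β i l * β j k ∧ β i l * β j k = β i k * β j l)
    (hB1 : ∀ x ∈ X 1,
        πh 1 x - π 1 x = zetaN X pt 1 x * (πh 1 xc - π 1 xc) / zetaN X pt 1 xc)
    (hB2 : ∀ i ∈ Finset.Icc 2 (n - 1), ∀ x ∈ X i,
        πh i x - π i x =
          β i n * zetaN X pt i x * (πh 1 xc - π 1 xc) / (β 1 n * zetaN X pt 1 xc))
    (hB3 : ∀ x ∈ X n,
        πh n x - π n x =
          β 2 n * zetaN X pt n x * (πh 1 xc - π 1 xc) / (β 1 2 * zetaN X pt 1 xc)) :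
    ∀ g : ℕ → ℕ, Set.BijOn g (Set.Icc 1 n) (Set.Icc 1 n) →
      ∀ x : ℕ → ℝ, (∀ i ∈ Finset.Icc 1 n, x i ∈ X i) →
        knwClosedF X π πh pt β n g x = knwClosedF X π πh pt β n id x := by
  have h1I : (1:ℕ) ∈ Icc 1 n := by rw [Finset.mem_Icc]; omega
  have h2I : (2:ℕ) ∈ Icc 1 n := by rw [Finset.mem_Icc]; omega
  have hnI : n ∈ Icc 1 n := by rw [Finset.mem_Icc]; omega
  have hβ12 : β 1 2 ≠ 0 := hβ_ne 1 h1I 2 h2I (by omega)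
  have hβ1n : β 1 n ≠ 0 := hβ_ne 1 h1I n hnI (by omega)
  have hkey : ∀ a m : ℕ, a ∈ Icc 1 n → m ∈ Icc 1 n → a ≠ n → m ≠ n → a ≠ m →
      β a m * β 1 n * β 2 n = β 1 2 * β m n * β a n := by
    intro a m haI hmI han hmn ham
    have haB := Finset.mem_Icc.mp haI
    have hmB := Finset.mem_Icc.mp hmI
    by_cases ha1 : a = 1
    · subst ha1
      by_cases hm2 : m = 2
      · subst hm2; ring
      · have h4 : 4 ≤ n := by omega
        obtain ⟨e1, e2⟩ := hcorr h4 1 h1I 2 h2I m hmI n hnI (by omega) (by omega)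
          (by omega) (by omega) (by omega) (by omega)
        have e3 := e1.trans e2
        linear_combination (-(β 1 n)) * e3
    · by_cases ha2 : a = 2
      · subst ha2
        by_cases hm1 : m = 1
        · subst hm1
          have hs : β 2 1 = β 1 2 := hβ_symm 2 h2I 1 h1I
          linear_combination β 1 n * β 2 n * hs
        · have h4 : 4 ≤ n := by omega
          obtain ⟨e1, e2⟩ := hcorr h4 1 h1I 2 h2I m hmI n hnI (by omega) (by omega)
            (by omega) (by omega) (by omega) (by omega)
          linear_combination (-(β 2 n)) * e1
      · by_cases hm1 : m = 1
        · subst hm1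
          have h4 : 4 ≤ n := by omega
          obtain ⟨e1, e2⟩ := hcorr h4 1 h1I 2 h2I a haI n hnI (by omega) (by omega)
            (by omega) (by omega) (by omega) (by omega)
          have e3 := e1.trans e2
          have hs : β a 1 = β 1 a := hβ_symm a haI 1 h1I
          linear_combination (-(β 1 n)) * e3 + β 1 n * β 2 n * hs
        · by_cases hm2 : m = 2
          · subst hm2
            have h4 : 4 ≤ n := by omega
            obtain ⟨e1, e2⟩ := hcorr h4 1 h1I 2 h2I a haI n hnI (by omega) (by omega)
              (by omega) (by omega) (by omega) (by omega)
            have hs : β a 2 = β 2 a := hβ_symm a haI 2 h2I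
            linear_combination (-(β 2 n)) * e1 + β 1 n * β 2 n * hs
          · have h4 : 4 ≤ n := by omega
            obtain ⟨e1, e2⟩ := hcorr h4 1 h1I 2 h2I a haI n hnI (by omega) (by omega)
              (by omega) (by omega) (by omega) (by omega)
            have e3 := e1.trans e2
            obtain ⟨f1, f2⟩ := hcorr h4 1 h1I a haI m hmI n hnI (by omega) (by omega)
              (by omega) (by omega) (by omega) (by omega)
            linear_combination (-(β m n)) * e3 + (-(β 2 n)) * f1
  have hpair : ∀ a ∈ Icc 1 n, ∀ b ∈ Icc 1 n, ∀ m ∈ Icc 1 n,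
      a ≠ b → a ≠ m → b ≠ m →
      β a m * cF β n (πh 1 xc - π 1 xc) (zetaN X pt 1 xc) b
        = β b m * cF β n (πh 1 xc - π 1 xc) (zetaN X pt 1 xc) a := by
    intro a haI b hbI m hmI hab ham hbm
    have haB := Finset.mem_Icc.mp haI
    have hbB := Finset.mem_Icc.mp hbI
    have hmB := Finset.mem_Icc.mp hmI
    by_cases hbn : b = n
    · have han : a ≠ n := fun h => hab (h.trans hbn.symm)
      have hmn : m ≠ n := fun h => hbm (hbn.trans h.symm)
      rw [hbn, cF_n, cF_ne han]
      rw [← mul_div_assoc, ← mul_div_assoc,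
        div_eq_div_iff (mul_ne_zero hβ12 hζxc) (mul_ne_zero hβ1n hζxc)]
      have hk := hkey a m haI hmI han hmn ham
      have hs : β n m = β m n := hβ_symm n hnI m hmI
      linear_combination (πh 1 xc - π 1 xc) * zetaN X pt 1 xc * hk
        + (-( (πh 1 xc - π 1 xc) * zetaN X pt 1 xc * β 1 2 * β a n)) * hs
    · by_cases han : a = n
      · have hbn' : b ≠ n := fun h => hab (han.trans h.symm)
        have hmn : m ≠ n := fun h => ham (han.trans h.symm)
        rw [han, cF_ne hbn', cF_n]
        rw [← mul_div_assoc, ← mul_div_assoc,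
          div_eq_div_iff (mul_ne_zero hβ1n hζxc) (mul_ne_zero hβ12 hζxc)]
        have hkb := hkey b m hbI hmI hbn' hmn hbm
        have hs : β n m = β m n := hβ_symm n hnI m hmI
        linear_combination (-((πh 1 xc - π 1 xc) * zetaN X pt 1 xc)) * hkb
          + (πh 1 xc - π 1 xc) * zetaN X pt 1 xc * β 1 2 * β b n * hs
      · rw [cF_ne hbn, cF_ne han]
        by_cases hmn : m = n
        · subst hmn
          ring
        · have h4 : 4 ≤ n := by omega
          obtain ⟨g1, g2⟩ := hcorr h4 a haI b hbI m hmI n hnI hab ham han hbm hbn hmn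
          rw [← mul_div_assoc, ← mul_div_assoc]
          congr 1
          linear_combination (-(πh 1 xc - π 1 xc)) * g2
  intro g hg x hx
  obtain ⟨σ, hσg, hσI⟩ := exists_perm_ext n g hg
  have hgσ : knwClosedF X π πh pt β n g x = knwClosedF X π πh pt β n (⇑σ) x :=
    knw_congr X π πh pt β n g (⇑σ) (fun p hp => (hσg p hp).symm) x
  have hidr : knwClosedF X π πh pt β n id x = knwClosedF X π πh pt β n (⇑(Equiv.refl ℕ)) x := by
    rw [Equiv.coe_refl]
  rw [hgσ, hidr, knw_expand X π πh pt β n σ hσI x,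
    knw_expand X π πh pt β n (Equiv.refl ℕ) (fun p hp => hp) x]
  congr 1
  refine Finset.sum_congr rfl fun A hA => ?_
  rw [Finset.mem_filter, Finset.mem_powerset] at hA
  obtain ⟨hAsub, hAcard⟩ := hA
  have hAne : A.Nonempty := Finset.card_pos.mp (by omega)
  have hD : ∀ k ∈ A, πh k (x k) - π k (x k)
      = cF β n (πh 1 xc - π 1 xc) (zetaN X pt 1 xc) k * zetaN X pt k (x k) := by
    intro k hk
    have hkI := hAsub hk
    have hkB := Finset.mem_Icc.mp hkI
    by_cases hkn : k = n
    · rw [hkn, cF_n, hB3 (x n) (hx n hnI)]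
      ring
    · by_cases hk1 : k = 1
      · subst hk1
        rw [cF_ne hkn, hB1 (x 1) (hx 1 hkI)]
        rw [mul_div_mul_left _ _ hβ1n]
        ring
      · rw [cF_ne hkn, hB2 k (by rw [Finset.mem_Icc]; omega) (x k) (hx k hkI)]
        ring
  rw [inner2_factor (lastF_mem σ hAne) hD, inner2_factor (lastF_mem (Equiv.refl ℕ) hAne) hD]
  rw [innerC_invariant β (cF β n (πh 1 xc - π 1 xc) (zetaN X pt 1 xc)) n hAsub hβ_symm hpair
    (lastF_mem σ hAne) (lastF_mem (Equiv.refl ℕ) hAne)]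

end KNW17

theorem stmt17 (n : ℕ) (hn : 3 ≤ n)
    (X : ℕ → Finset ℝ) (π πh pt : ℕ → ℝ → ℝ) (β : ℕ → ℕ → ℝ)
    (hXne : ∀ i ∈ Finset.Icc 1 n, (X i).Nonempty)
    (hπ_pos : ∀ i ∈ Finset.Icc 1 n, ∀ x ∈ X i, 0 < π i x)
    (hπ_sum : ∀ i ∈ Finset.Icc 1 n, ∑ x ∈ X i, π i x = 1)
    (hpt_nn : ∀ i ∈ Finset.Icc 1 n, ∀ x ∈ X i, 0 ≤ pt i x)
    (hpt_sum : ∀ i ∈ Finset.Icc 1 n, ∑ x ∈ X i, pt i x = 1)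
    (hpt_nd : ∀ i ∈ Finset.Icc 1 n, 1 < ((X i).filter fun x => pt i x ≠ 0).card)
    (hph_nn : ∀ i ∈ Finset.Icc 1 n, ∀ x ∈ X i, 0 ≤ πh i x)
    (hph_sum : ∀ i ∈ Finset.Icc 1 n, ∑ x ∈ X i, πh i x = 1)
    (hβ_symm : ∀ i ∈ Finset.Icc 1 n, ∀ j ∈ Finset.Icc 1 n, β i j = β j i)
    -- all covariances between pairs of sites are nonzero
    (hβ_ne : ∀ i ∈ Finset.Icc 1 n, ∀ j ∈ Finset.Icc 1 n, i ≠ j → β i j ≠ 0)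
    -- a reference point `x̌ ∈ X_1` with `ζ_1(x̌) ≠ 0`
    (xc : ℝ) (hxc : xc ∈ X 1) (hζxc : zetaN X pt 1 xc ≠ 0)
    -- for `n ≥ 4`, the correlation multiplication equalities
    (hcorr : 4 ≤ n →
      ∀ i ∈ Finset.Icc 1 n, ∀ j ∈ Finset.Icc 1 n, ∀ k ∈ Finset.Icc 1 n, ∀ l ∈ Finset.Icc 1 n,
        i ≠ j → i ≠ k → i ≠ l → j ≠ k → j ≠ l → k ≠ l →
        β i j * β k l = β i l * β j k ∧ β i l * β j k = β i k * β j l) :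
    -- the permutation property of the family `(Π_g)_g` …
    (∀ g : ℕ → ℕ, Set.BijOn g (Set.Icc 1 n) (Set.Icc 1 n) →
      ∀ x : ℕ → ℝ, (∀ i ∈ Finset.Icc 1 n, x i ∈ X i) →
        knwClosedF X π πh pt β n g x = knwClosedF X π πh pt β n id x) ↔
      -- … holds iff `π̂ − π` has the closed form below, with `t = π̂_1(x̌) − π_1(x̌)`
      ((∀ x ∈ X 1,
          πh 1 x - π 1 x = zetaN X pt 1 x * (πh 1 xc - π 1 xc) / zetaN X pt 1 xc) ∧
       (∀ i ∈ Finset.Icc 2 (n - 1), ∀ x ∈ X i,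
          πh i x - π i x =
            β i n * zetaN X pt i x * (πh 1 xc - π 1 xc) / (β 1 n * zetaN X pt 1 xc)) ∧
       (∀ x ∈ X n,
          πh n x - π n x =
            β 2 n * zetaN X pt n x * (πh 1 xc - π 1 xc) / (β 1 2 * zetaN X pt 1 xc))) := by
  constructor
  · intro hperm
    exact KNW17.forward n hn X π πh pt β hXne hπ_sum hpt_nn hpt_sum hpt_nd hph_sum hβ_symm
      hβ_ne xc hxc hζxc hcorr hperm
  · rintro ⟨hB1, hB2, hB3⟩
    exact KNW17.backward n hn X π πh pt β hβ_symm hβ_ne xc hxc hζxc hcorr hB1 hB2 hB3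
end

section
/- Let n ≥ 2, suppose π̂_j = π_j for all j ∈ {1,…,n}, and fix an index i such that β_{ij} = 0 for all j ≠ i. Then the KNW closed-form function factorizes: Π_n(x_1,…,x_n) = π_i(x_i) · Π'_{n−1}(x_1,…,x_{i−1},x_{i+1},…,x_n) for all x, where Π'_{n−1} is the KNW closed-form function for the index sequence (1,…,i−1,i+1,…,n) with the same data. In particular, if Π_n is nonnegative (hence a probability mass function), the coordinate X_i is independent of the remaining coordinates (X_j)_{j≠i}. -/
open Finset

noncomputable def Gfun (f z : ℕ → ℝ) (b : ℕ → ℕ → ℝ) (m : ℕ) (σ : ℕ → ℕ) : ℝ :=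
  (∏ i ∈ Finset.Icc 1 m, f (σ i)) +
    ∑ i ∈ Finset.Icc 2 m,
      (z (σ i) *
          ∑ j ∈ Finset.Icc 1 (i - 1),
            (∏ k ∈ (Finset.Icc 1 (i - 1)).erase j, f (σ k)) * b (σ i) (σ j) * z (σ j)) *
        ∏ k ∈ Finset.Icc (i + 1) m, f (σ k)

lemma shf_inj (i₀ : ℕ) : Function.Injective (fun k => if k < i₀ then k else k + 1) := by
  intro a b h; simp only at h; split_ifs at h <;> omega

lemma img1 (i₀ a m : ℕ) (ha : a ≤ i₀) (h1 : 1 ≤ i₀) (hm : i₀ ≤ m) :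
    (Icc a (m - 1)).image (fun k => if k < i₀ then k else k + 1) = (Icc a m).erase i₀ := by
  ext j
  simp only [mem_image, mem_erase, mem_Icc]
  constructor
  · rintro ⟨k, hk, rfl⟩; split_ifs <;> omega
  · rintro ⟨hne, h1', h2'⟩
    by_cases h : j < i₀
    · exact ⟨j, by omega, by simp [h]⟩
    · exact ⟨j - 1, by omega, by rw [if_neg (by omega)]; omega⟩

lemma img2 (i₀ a m : ℕ) (ha : i₀ ≤ a) :
    (Icc a m).image (fun k => if k < i₀ then k else k + 1) = Icc (a + 1) (m + 1) := by
  ext j; simp only [mem_image, mem_Icc]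
  constructor
  · rintro ⟨k, hk, rfl⟩; rw [if_neg (by omega)]; omega
  · intro h; exact ⟨j - 1, by omega, by rw [if_neg (by omega)]; omega⟩

lemma img3 (i₀ n : ℕ) (h1 : 1 ≤ i₀) (h2 : i₀ ≤ n) (hn : 2 ≤ n) :
    (Icc 2 (n - 1)).image (fun k => if k < i₀ then k else k + 1) = (Icc 2 n).erase (max i₀ 2) := by
  ext j; simp only [mem_image, mem_erase, mem_Icc]
  constructor
  · rintro ⟨k, hk, rfl⟩; split_ifs <;> omega
  · rintro ⟨hne, hj1, hj2⟩
    by_cases h : j < i₀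
    · exact ⟨j, by omega, by simp [h]⟩
    · exact ⟨j - 1, by omega, by rw [if_neg (by omega)]; omega⟩

lemma keyfact (f z : ℕ → ℝ) (b : ℕ → ℕ → ℝ) (n i₀ : ℕ) (hn : 2 ≤ n) (h1 : 1 ≤ i₀)
    (h2 : i₀ ≤ n) (hb1 : ∀ j, j ≠ i₀ → b i₀ j = 0) (hb2 : ∀ j, j ≠ i₀ → b j i₀ = 0) :
    Gfun f z b n id = f i₀ * Gfun f z b (n - 1) (fun k => if k < i₀ then k else k + 1) := by
  set σ : ℕ → ℕ := fun k => if k < i₀ then k else k + 1 with hσdef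
  have hinj : ∀ (s : Finset ℕ), ∀ x ∈ s, ∀ y ∈ s, σ x = σ y → x = y :=
    fun s x _ y _ h => shf_inj i₀ h
  unfold Gfun
  simp only [id_eq]
  rw [mul_add]
  congr 1
  · -- products
    rw [← Finset.mul_prod_erase _ f (show i₀ ∈ Icc 1 n by simp only [mem_Icc]; omega)]
    congr 1
    rw [← img1 i₀ 1 n h1 h1 h2, Finset.prod_image (hinj _)]
  · -- sums
    have hm0 : max i₀ 2 ∈ Icc 2 n := by simp only [mem_Icc]; omega
    rw [← Finset.add_sum_erase _ _ hm0]
    have hS0 : ∑ j ∈ Icc 1 (max i₀ 2 - 1),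
        (∏ k ∈ (Icc 1 (max i₀ 2 - 1)).erase j, f k) * b (max i₀ 2) j * z j = 0 := by
      apply Finset.sum_eq_zero
      intro j hj
      simp only [mem_Icc] at hj
      have hb : b (max i₀ 2) j = 0 := by
        rcases le_or_gt 2 i₀ with h | h
        · have hmax : max i₀ 2 = i₀ := by omega
          rw [hmax]; exact hb1 j (by omega)
        · have hj1 : j = i₀ := by omega
          have hmax : max i₀ 2 = 2 := by omega
          rw [hmax, hj1]; exact hb2 2 (by omega)
      rw [hb]; ring
    rw [hS0, mul_zero, zero_mul, zero_add]
    rw [← img3 i₀ n h1 h2 hn, Finset.sum_image (hinj _), Finset.mul_sum]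
    apply Finset.sum_congr rfl
    intro i' hi'
    simp only [mem_Icc] at hi'
    by_cases hc : i' < i₀
    · -- case i' < i₀
      have hσi : σ i' = i' := if_pos hc
      rw [hσi]
      have hinner : ∑ j ∈ Icc 1 (i' - 1),
            (∏ k ∈ (Icc 1 (i' - 1)).erase j, f (σ k)) * b i' (σ j) * z (σ j)
          = ∑ j ∈ Icc 1 (i' - 1), (∏ k ∈ (Icc 1 (i' - 1)).erase j, f k) * b i' j * z j := by
        apply Finset.sum_congr rfl
        intro j hj
        simp only [mem_Icc] at hj
        have hσj : σ j = j := if_pos (by omega)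
        rw [hσj]
        congr 2
        apply Finset.prod_congr rfl
        intro k hk
        simp only [mem_erase, mem_Icc] at hk
        rw [show σ k = k from if_pos (by omega)]
      have htail : ∏ k ∈ Icc (i' + 1) n, f k
          = f i₀ * ∏ k ∈ Icc (i' + 1) (n - 1), f (σ k) := by
        rw [← Finset.mul_prod_erase _ f
          (show i₀ ∈ Icc (i' + 1) n by simp only [mem_Icc]; omega)]
        congr 1
        rw [← img1 i₀ (i' + 1) n (by omega) h1 h2, Finset.prod_image (hinj _)]
      rw [hinner, htail]; ring
    · -- case i₀ ≤ i'
      have hσi : σ i' = i' + 1 := if_neg (by omega)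
      rw [hσi]
      simp only [Nat.add_sub_cancel]
      have htail : ∏ k ∈ Icc (i' + 1) (n - 1), f (σ k) = ∏ k ∈ Icc (i' + 1 + 1) n, f k := by
        have h' : Icc (i' + 1 + 1) n = (Icc (i' + 1) (n - 1)).image σ := by
          rw [img2 i₀ (i' + 1) (n - 1) (by omega)]
          congr 1; omega
        rw [h', Finset.prod_image (hinj _)]
      have hsplit : ∑ j ∈ Icc 1 i', (∏ k ∈ (Icc 1 i').erase j, f k) * b (i' + 1) j * z j
          = f i₀ * ∑ j ∈ Icc 1 (i' - 1),
              (∏ k ∈ (Icc 1 (i' - 1)).erase j, f (σ k)) * b (i' + 1) (σ j) * z (σ j) := by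
        rw [← Finset.add_sum_erase _ _ (show i₀ ∈ Icc 1 i' by simp only [mem_Icc]; omega)]
        have h0 : (∏ k ∈ (Icc 1 i').erase i₀, f k) * b (i' + 1) i₀ * z i₀ = 0 := by
          rw [hb2 (i' + 1) (by omega)]; ring
        rw [h0, zero_add]
        have himg : (Icc 1 i').erase i₀ = (Icc 1 (i' - 1)).image σ :=
          (img1 i₀ 1 i' h1 h1 (by omega)).symm
        rw [himg, Finset.sum_image (hinj _), Finset.mul_sum]
        apply Finset.sum_congr rfl
        intro j hj
        simp only [mem_Icc] at hj
        have hσj_ne : σ j ≠ i₀ := by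
          simp only [hσdef]; split_ifs <;> omega
        have hprod : ∏ k ∈ (Icc 1 i').erase (σ j), f k
            = f i₀ * ∏ k ∈ (Icc 1 (i' - 1)).erase j, f (σ k) := by
          rw [← Finset.mul_prod_erase _ f
            (show i₀ ∈ (Icc 1 i').erase (σ j) from
              mem_erase.2 ⟨Ne.symm hσj_ne, by simp only [mem_Icc]; omega⟩)]
          congr 1
          have he : ((Icc 1 i').erase (σ j)).erase i₀ = ((Icc 1 (i' - 1)).erase j).image σ := by
            rw [Finset.erase_right_comm, ← img1 i₀ 1 i' h1 h1 (by omega),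
              Finset.image_erase (shf_inj i₀)]
          rw [he, Finset.prod_image (hinj _)]
        rw [hprod]; ring
      rw [hsplit, htail]; ring

lemma knw_eq_G (X : ℕ → Finset ℝ) (π πh pt : ℕ → ℝ → ℝ) (β B : ℕ → ℕ → ℝ)
    (m : ℕ) (σ : ℕ → ℕ) (x : ℕ → ℝ)
    (hf : ∀ k ∈ Icc 1 m, πh (σ k) (x (σ k)) = π (σ k) (x (σ k)))
    (hB : ∀ i ∈ Icc 1 m, ∀ j ∈ Icc 1 m, β (σ i) (σ j) = B (σ i) (σ j)) :
    knwClosedF X π πh pt β m σ x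
      = Gfun (fun k => π k (x k)) (fun k => zetaN X pt k (x k)) B m σ := by
  unfold knwClosedF Gfun
  congr 1
  apply Finset.sum_congr rfl
  intro i hi
  simp only [mem_Icc] at hi
  congr 2
  apply Finset.sum_congr rfl
  intro j hj
  simp only [mem_Icc] at hj
  have hp : (∏ k ∈ (Icc 1 (i - 1)).erase j, πh (σ k) (x (σ k)))
      = ∏ k ∈ (Icc 1 (i - 1)).erase j, π (σ k) (x (σ k)) := by
    apply Finset.prod_congr rfl
    intro k hk
    simp only [mem_erase, mem_Icc] at hk
    exact hf k (by simp only [mem_Icc]; omega)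
  rw [hp, hB i (by simp only [mem_Icc]; omega) j (by simp only [mem_Icc]; omega)]

lemma knw_congr (X : ℕ → Finset ℝ) (π πh pt : ℕ → ℝ → ℝ) (β : ℕ → ℕ → ℝ)
    (m : ℕ) (σ : ℕ → ℕ) (x y : ℕ → ℝ) (h : ∀ k, x (σ k) = y (σ k)) :
    knwClosedF X π πh pt β m σ x = knwClosedF X π πh pt β m σ y := by
  unfold knwClosedF
  simp only [h]
theorem stmt18 (n : ℕ) (hn : 2 ≤ n)
    (X : ℕ → Finset ℝ) (π πh pt : ℕ → ℝ → ℝ) (β : ℕ → ℕ → ℝ)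
    (hXne : ∀ i ∈ Finset.Icc 1 n, (X i).Nonempty)
    (hπ_pos : ∀ i ∈ Finset.Icc 1 n, ∀ x ∈ X i, 0 < π i x)
    (hπ_sum : ∀ i ∈ Finset.Icc 1 n, ∑ x ∈ X i, π i x = 1)
    (hpt_nn : ∀ i ∈ Finset.Icc 1 n, ∀ x ∈ X i, 0 ≤ pt i x)
    (hpt_sum : ∀ i ∈ Finset.Icc 1 n, ∑ x ∈ X i, pt i x = 1)
    (hpt_nd : ∀ i ∈ Finset.Icc 1 n, 1 < ((X i).filter fun x => pt i x ≠ 0).card)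
    (hph_nn : ∀ i ∈ Finset.Icc 1 n, ∀ x ∈ X i, 0 ≤ πh i x)
    (hph_sum : ∀ i ∈ Finset.Icc 1 n, ∑ x ∈ X i, πh i x = 1)
    (hβ_symm : ∀ i ∈ Finset.Icc 1 n, ∀ j ∈ Finset.Icc 1 n, β i j = β j i)
    -- assume `π̂_j = π_j` for all `j`
    (hph_eq : ∀ j ∈ Finset.Icc 1 n, ∀ x ∈ X j, πh j x = π j x)
    -- a fixed index `i₀` uncorrelated with all other indices
    (i₀ : ℕ) (hi₀ : i₀ ∈ Finset.Icc 1 n)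
    (hβ0 : ∀ j ∈ Finset.Icc 1 n, j ≠ i₀ → β i₀ j = 0) :
    -- the KNW closed-form function factorizes, `Π'` being the KNW closed-form
    -- function for the index sequence `(1,…,i₀−1,i₀+1,…,n)` …
    (∀ x : ℕ → ℝ, (∀ k ∈ Finset.Icc 1 n, x k ∈ X k) →
      knwClosedF X π πh pt β n id x =
        π i₀ (x i₀) *
          knwClosedF X π πh pt β (n - 1) (fun k => if k < i₀ then k else k + 1) x) ∧
    -- … and in particular, if it is nonnegative (hence a pmf), the coordinate at `i₀`
    -- is independent of the remaining coordinates
    ((∀ x : ℕ → ℝ, (∀ k ∈ Finset.Icc 1 n, x k ∈ X k) →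
        0 ≤ knwClosedF X π πh pt β n id x) →
      ∀ x : ℕ → ℝ, (∀ k ∈ Finset.Icc 1 n, x k ∈ X k) →
        knwClosedF X π πh pt β n id x =
          π i₀ (x i₀) *
            ∑ a ∈ X i₀, knwClosedF X π πh pt β n id (Function.update x i₀ a)) := by
  have hio : 1 ≤ i₀ ∧ i₀ ≤ n := by simpa using hi₀
  set B : ℕ → ℕ → ℝ := fun i j =>
    if i = i₀ then (if j = i₀ then β i j else 0) else (if j = i₀ then 0 else β i j) with hBdef
  have hb1 : ∀ j, j ≠ i₀ → B i₀ j = 0 := by intro j hj; simp [hBdef, hj]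
  have hb2 : ∀ j, j ≠ i₀ → B j i₀ = 0 := by intro j hj; simp [hBdef, hj]
  have hβB : ∀ i ∈ Finset.Icc 1 n, ∀ j ∈ Finset.Icc 1 n, β i j = B i j := by
    intro i hi j hj
    simp only [hBdef]
    split_ifs with h1 h2 h2
    · rfl
    · rw [h1]; exact hβ0 j hj h2
    · rw [h2, hβ_symm i hi i₀ hi₀]; exact hβ0 i hi h1
    · rfl
  have main : ∀ x : ℕ → ℝ, (∀ k ∈ Finset.Icc 1 n, x k ∈ X k) →
      knwClosedF X π πh pt β n id x =
        π i₀ (x i₀) *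
          knwClosedF X π πh pt β (n - 1) (fun k => if k < i₀ then k else k + 1) x := by
    intro x hx
    have e1 : knwClosedF X π πh pt β n id x
        = Gfun (fun k => π k (x k)) (fun k => zetaN X pt k (x k)) B n id := by
      apply knw_eq_G
      · intro k hk; exact hph_eq k hk _ (hx k hk)
      · intro i hi j hj; exact hβB i hi j hj
    have e2 : knwClosedF X π πh pt β (n - 1) (fun k => if k < i₀ then k else k + 1) x
        = Gfun (fun k => π k (x k)) (fun k => zetaN X pt k (x k)) B (n - 1)
            (fun k => if k < i₀ then k else k + 1) := by
      apply knw_eq_G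
      · intro k hk
        simp only [Finset.mem_Icc] at hk
        have hm : (if k < i₀ then k else k + 1) ∈ Finset.Icc 1 n := by
          simp only [Finset.mem_Icc]; split_ifs <;> omega
        exact hph_eq _ hm _ (hx _ hm)
      · intro i hi j hj
        simp only [Finset.mem_Icc] at hi hj
        have hmi : (if i < i₀ then i else i + 1) ∈ Finset.Icc 1 n := by
          simp only [Finset.mem_Icc]; split_ifs <;> omega
        have hmj : (if j < i₀ then j else j + 1) ∈ Finset.Icc 1 n := by
          simp only [Finset.mem_Icc]; split_ifs <;> omega
        exact hβB _ hmi _ hmj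
    rw [e1, e2]
    exact keyfact _ _ B n i₀ hn hio.1 hio.2 hb1 hb2
  refine ⟨main, ?_⟩
  intro _ x hx
  have hσne : ∀ k : ℕ, (if k < i₀ then k else k + 1) ≠ i₀ := by
    intro k; split_ifs <;> omega
  have hupd : ∀ a ∈ X i₀, ∀ k ∈ Finset.Icc 1 n, Function.update x i₀ a k ∈ X k := by
    intro a ha k hk
    rcases eq_or_ne k i₀ with rfl | h
    · simpa [Function.update_self] using ha
    · rw [Function.update_of_ne h]; exact hx k hk
  have hsum : ∑ a ∈ X i₀, knwClosedF X π πh pt β n id (Function.update x i₀ a)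
      = knwClosedF X π πh pt β (n - 1) (fun k => if k < i₀ then k else k + 1) x := by
    have hterm : ∀ a ∈ X i₀, knwClosedF X π πh pt β n id (Function.update x i₀ a)
        = π i₀ a * knwClosedF X π πh pt β (n - 1) (fun k => if k < i₀ then k else k + 1) x := by
      intro a ha
      rw [main _ (hupd a ha), Function.update_self]
      congr 1
      apply knw_congr
      intro k
      rw [Function.update_of_ne (hσne k)]
    rw [Finset.sum_congr rfl hterm, ← Finset.sum_mul, hπ_sum i₀ hi₀, one_mul]
  rw [hsum, ← main x hx]
end
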